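/- arXiv:1804.03581 — 5 statements merged into one kernel-verified Lean document; each statement's English description precedes it below -/
import Mathlib

section
/- Let n and k be positive integers with k ≥ 2, let F be a family of subsets of [n] = {1,2,...,n} that is k-partition-free, and let j_1, ..., j_k be non-negative integers satisfying j_1 + ... + j_k = n. Then the sum over i = 1,...,k of |F^{(j_i)}| / binom(n, j_i) is at most k − 1, where F^{(j)} denotes the subfamily of members of F having exactly j elements. -/
/-- A family `F` of subsets of `[n]` is `k`-partition-free if there are no sets
`F_1, ..., F_k ∈ F` that are pairwise disjoint and whose union is `[n]`. -/
def PartitionFree {n : ℕ} (k : ℕ) (F : Finset (Finset (Fin n))) : Prop :=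
  ¬ ∃ P : Fin k → Finset (Fin n), (∀ i, P i ∈ F) ∧
      (∀ i j, i ≠ j → Disjoint (P i) (P j)) ∧
      Finset.univ.biUnion P = Finset.univ
open Finset

lemma exists_perm_image {n : ℕ} {A B : Finset (Fin n)} (h : A.card = B.card) :
    ∃ σ : Equiv.Perm (Fin n), A.image σ = B := by
  classical
  have e : {x // x ∈ A} ≃ {x // x ∈ B} := Finset.equivOfCardEq h
  have hc : Aᶜ.card = Bᶜ.card := by simp [Finset.card_compl, h]
  have e2 : {x : Fin n // ¬ x ∈ A} ≃ {x : Fin n // ¬ x ∈ B} :=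
    (Equiv.subtypeEquivRight (fun x => (Finset.mem_compl (s := A)).symm)).trans
      ((Finset.equivOfCardEq hc).trans (Equiv.subtypeEquivRight (fun x => Finset.mem_compl)))
  refine ⟨(Equiv.sumCompl (· ∈ A)).symm.trans ((e.sumCongr e2).trans (Equiv.sumCompl (· ∈ B))), ?_⟩
  have hsub : ∀ x ∈ A, ((Equiv.sumCompl (· ∈ A)).symm.trans ((e.sumCongr e2).trans (Equiv.sumCompl (· ∈ B)))) x ∈ B := by
    intro x hx
    simp [Equiv.sumCompl_symm_apply_of_pos (p := (· ∈ A)) hx]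
  apply Finset.eq_of_subset_of_card_le
  · intro y hy
    obtain ⟨x, hx, rfl⟩ := Finset.mem_image.mp hy
    exact hsub x hx
  · rw [Finset.card_image_of_injective _ (Equiv.injective _), h]

/-- The finset of ordered partitions of `Fin n` with part sizes `j`. -/
noncomputable def KPart (n k : ℕ) (j : Fin k → ℕ) : Finset (Fin k → Finset (Fin n)) := by
  classical
  exact Finset.univ.filter fun P => (∀ i, (P i).card = j i) ∧
    (∀ a b, a ≠ b → Disjoint (P a) (P b)) ∧ Finset.univ.biUnion P = Finset.univ

lemma mem_KPart {n k : ℕ} {j : Fin k → ℕ} {P : Fin k → Finset (Fin n)} :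
    P ∈ KPart n k j ↔ (∀ i, (P i).card = j i) ∧
      (∀ a b, a ≠ b → Disjoint (P a) (P b)) ∧ Finset.univ.biUnion P = Finset.univ := by
  simp [KPart]

lemma image_mem_KPart {n k : ℕ} {j : Fin k → ℕ} (σ : Equiv.Perm (Fin n))
    {P : Fin k → Finset (Fin n)} (hP : P ∈ KPart n k j) :
    (fun l => (P l).image σ) ∈ KPart n k j := by
  rw [mem_KPart] at hP ⊢
  obtain ⟨h1, h2, h3⟩ := hP
  refine ⟨fun l => by rw [Finset.card_image_of_injective _ σ.injective]; exact h1 l,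
    fun a b hab => ?_, ?_⟩
  · rw [Finset.disjoint_image σ.injective]
    exact h2 a b hab
  · rw [← Finset.biUnion_image, h3]
    simp [Finset.image_univ_equiv]

lemma fiber_card_eq {n k : ℕ} {j : Fin k → ℕ} (i : Fin k) {A B : Finset (Fin n)}
    (h : A.card = B.card) :
    ((KPart n k j).filter fun P => P i = A).card
      = ((KPart n k j).filter fun P => P i = B).card := by
  classical
  obtain ⟨σ, hσ⟩ := exists_perm_image h
  apply Finset.card_nbij' (fun P => fun l => (P l).image σ) (fun Q => fun l => (Q l).image σ.symm)
  · intro P hP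
    rw [Finset.mem_coe, Finset.mem_filter] at hP ⊢
    exact ⟨image_mem_KPart σ hP.1, by simp only []; rw [hP.2, hσ]⟩
  · intro Q hQ
    rw [Finset.mem_coe, Finset.mem_filter] at hQ ⊢
    refine ⟨image_mem_KPart σ.symm hQ.1, ?_⟩
    show (Q i).image σ.symm = A
    rw [hQ.2, ← hσ]
    simp [Finset.image_image]
  · intro P _; funext l; simp [Finset.image_image]
  · intro Q _; funext l; simp [Finset.image_image]

section
variable {n k : ℕ} {j : Fin k → ℕ}

private def psum (k : ℕ) (j : Fin k → ℕ) (m : ℕ) : ℕ :=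
  ∑ l ∈ Finset.univ.filter (fun l : Fin k => (l : ℕ) < m), j l

lemma psum_mono {m m' : ℕ} (h : m ≤ m') : psum k j m ≤ psum k j m' := by
  apply Finset.sum_le_sum_of_subset
  intro l hl
  simp only [Finset.mem_filter, Finset.mem_univ, true_and] at hl ⊢
  omega

lemma psum_succ {m : ℕ} (hm : m < k) :
    psum k j (m + 1) = psum k j m + j ⟨m, hm⟩ := by
  have : Finset.univ.filter (fun l : Fin k => (l : ℕ) < m + 1)
      = insert ⟨m, hm⟩ (Finset.univ.filter (fun l : Fin k => (l : ℕ) < m)) := by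
    ext l
    simp only [Finset.mem_filter, Finset.mem_univ, true_and, Finset.mem_insert]
    constructor
    · intro hl
      rcases Nat.lt_succ_iff_lt_or_eq.mp hl with h | h
      · exact Or.inr h
      · exact Or.inl (Fin.ext h)
    · rintro (rfl | h)
      · exact Nat.lt_succ_self m
      · exact Nat.lt_succ_of_lt h
  simp only [psum]
  rw [this, Finset.sum_insert (by simp), add_comm]

lemma psum_k (hj : ∑ i, j i = n) : psum k j k = n := by
  rw [← hj]
  apply Finset.sum_congr _ (fun _ _ => rfl)
  ext l; simp [l.isLt]

lemma psum_le (hj : ∑ i, j i = n) (m : ℕ) : psum k j m ≤ n := by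
  rw [← hj]
  exact Finset.sum_le_sum_of_subset (Finset.filter_subset _ _)

private noncomputable def basePart (n k : ℕ) (j : Fin k → ℕ) : Fin k → Finset (Fin n) := by
  classical
  exact fun i => Finset.univ.filter fun x : Fin n => psum k j i ≤ (x : ℕ) ∧ (x : ℕ) < psum k j (i + 1)

lemma basePart_image (hj : ∑ i, j i = n) (i : Fin k) :
    (basePart n k j i).image Fin.val = Finset.Ico (psum k j i) (psum k j (i + 1)) := by
  classical
  ext m
  simp only [basePart, Finset.mem_image, Finset.mem_filter, Finset.mem_univ, true_and,
    Finset.mem_Ico]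
  constructor
  · rintro ⟨x, hx, rfl⟩; exact hx
  · rintro ⟨h1, h2⟩
    have hmn : m < n := lt_of_lt_of_le h2 (psum_le hj _)
    exact ⟨⟨m, hmn⟩, ⟨h1, h2⟩, rfl⟩

lemma basePart_mem (hj : ∑ i, j i = n) : basePart n k j ∈ KPart n k j := by
  classical
  rw [mem_KPart]
  refine ⟨fun i => ?_, fun a b hab => ?_, ?_⟩
  · have := basePart_image (n := n) (j := j) hj i
    have hcard : (basePart n k j i).card = (Finset.Ico (psum k j i) (psum k j (i + 1))).card := by
      rw [← this, Finset.card_image_of_injective _ Fin.val_injective]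
    rw [hcard, Nat.card_Ico, psum_succ i.isLt]
    simp
  · rw [Finset.disjoint_left]
    intro x hxa hxb
    simp only [basePart, Finset.mem_filter, Finset.mem_univ, true_and] at hxa hxb
    have hab' : (a : ℕ) ≠ (b : ℕ) := fun h => hab (Fin.ext h)
    rcases hab'.lt_or_gt with h | h
    · have : psum k j (a + 1) ≤ psum k j b := psum_mono h
      omega
    · have : psum k j (b + 1) ≤ psum k j a := psum_mono h
      omega
  · apply Finset.eq_univ_of_forall
    intro x
    rw [Finset.mem_biUnion]
    set g := Nat.findGreatest (fun m => psum k j m ≤ (x : ℕ)) k with hg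
    have hP0 : psum k j 0 ≤ (x : ℕ) := by simp [psum]
    have hspec : psum k j g ≤ (x : ℕ) := Nat.findGreatest_spec (P := fun m => psum k j m ≤ (x : ℕ)) (Nat.zero_le k) hP0
    have hgle : g ≤ k := Nat.findGreatest_le k
    have hgk : g < k := by
      rcases lt_or_eq_of_le hgle with h | h
      · exact h
      · exfalso
        rw [h, psum_k hj] at hspec
        exact absurd x.isLt (not_lt.mpr hspec)
    have hng : ¬ psum k j (g + 1) ≤ (x : ℕ) :=
      Nat.findGreatest_is_greatest (P := fun m => psum k j m ≤ (x : ℕ)) (by omega) hgk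
    refine ⟨⟨g, hgk⟩, Finset.mem_univ _, ?_⟩
    simp only [basePart, Finset.mem_filter, Finset.mem_univ, true_and]
    exact ⟨hspec, not_le.mp hng⟩
end
/-- **Kleitman's Lemma.** If `F ⊆ 2^[n]` is `k`-partition-free and
`j_1 + ... + j_k = n`, then `∑_i |F^{(j_i)}| / C(n, j_i) ≤ k - 1`. -/
theorem kleitman_lemma (n k : ℕ) (hn : 0 < n) (hk : 2 ≤ k)
    (F : Finset (Finset (Fin n))) (hF : PartitionFree k F)
    (j : Fin k → ℕ) (hj : ∑ i, j i = n) :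
    ∑ i, ((F.filter fun A => A.card = j i).card : ℝ) / (n.choose (j i)) ≤ (k : ℝ) - 1 := by
  classical
  set S := KPart n k j with hS
  set N := S.card with hN
  have hbase := basePart_mem (n := n) (k := k) (j := j) hj
  have hNpos : 0 < N := Finset.card_pos.mpr ⟨_, hbase⟩
  have hbcard : ∀ i, (basePart n k j i).card = j i := (mem_KPart.mp hbase).1
  -- fiber count
  set c : Fin k → ℕ := fun i => (S.filter fun P => P i = basePart n k j i).card with hc
  have hfib : ∀ (i : Fin k) (A : Finset (Fin n)), A.card = j i →
      (S.filter fun P => P i = A).card = c i := by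
    intro i A hA
    exact fiber_card_eq i (by rw [hA, hbcard i])
  -- N = choose * c i
  have hNc : ∀ i, N = n.choose (j i) * c i := by
    intro i
    have h1 : N = ∑ A ∈ Finset.powersetCard (j i) Finset.univ,
        (S.filter fun P => P i = A).card := by
      apply Finset.card_eq_sum_card_fiberwise
      intro P hP
      rw [Finset.mem_coe, Finset.mem_powersetCard_univ]
      exact (mem_KPart.mp hP).1 i
    rw [h1, Finset.sum_congr rfl (fun A hA => hfib i A (Finset.mem_powersetCard_univ.mp hA)),
      Finset.sum_const, smul_eq_mul, Finset.card_powersetCard, Finset.card_univ,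
      Fintype.card_fin]
  -- count of partitions whose i-th part is in F
  have hcount : ∀ i, (S.filter fun P => P i ∈ F).card
      = (F.filter fun A => A.card = j i).card * c i := by
    intro i
    have h1 : (S.filter fun P => P i ∈ F).card
        = ∑ A ∈ F.filter (fun A => A.card = j i),
            ((S.filter fun P => P i ∈ F).filter fun P => P i = A).card := by
      apply Finset.card_eq_sum_card_fiberwise
      intro P hP
      rw [Finset.mem_coe, Finset.mem_filter] at hP ⊢
      exact ⟨hP.2, (mem_KPart.mp hP.1).1 i⟩
    have h2 : ∀ A ∈ F.filter (fun A => A.card = j i),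
        ((S.filter fun P => P i ∈ F).filter fun P => P i = A).card = c i := by
      intro A hA
      rw [Finset.mem_filter] at hA
      rw [← hfib i A hA.2]
      congr 1
      ext P
      simp only [Finset.mem_filter]
      constructor
      · rintro ⟨⟨h1', _⟩, h3'⟩; exact ⟨h1', h3'⟩
      · rintro ⟨h1', h3'⟩; exact ⟨⟨h1', by rw [h3']; exact hA.1⟩, h3'⟩
    rw [h1, Finset.sum_congr rfl h2, Finset.sum_const, smul_eq_mul]
  -- ∑_i count ≤ (k-1) * N
  have hmain : ∑ i, (S.filter fun P => P i ∈ F).card ≤ (k - 1) * N := by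
    have h1 : ∀ i : Fin k, (S.filter fun P => P i ∈ F).card
        = ∑ P ∈ S, if P i ∈ F then 1 else 0 := by
      intro i; rw [Finset.card_filter]
    calc ∑ i, (S.filter fun P => P i ∈ F).card
        = ∑ P ∈ S, ∑ i : Fin k, (if P i ∈ F then 1 else 0) := by
          rw [Finset.sum_congr rfl (fun i _ => h1 i), Finset.sum_comm]
      _ ≤ ∑ _P ∈ S, (k - 1) := by
          apply Finset.sum_le_sum
          intro P hP
          obtain ⟨h1', h2', h3'⟩ := mem_KPart.mp hP
          have hex : ∃ i, P i ∉ F := by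
            by_contra hcon
            push_neg at hcon
            exact hF ⟨P, hcon, h2', h3'⟩
          obtain ⟨i0, hi0⟩ := hex
          have : ∑ i : Fin k, (if P i ∈ F then 1 else 0)
              = (Finset.univ.filter fun i => P i ∈ F).card := by
            rw [Finset.card_filter]
          rw [this]
          have hsub : (Finset.univ.filter fun i => P i ∈ F) ⊆ Finset.univ.erase i0 := by
            intro i hi
            rw [Finset.mem_filter] at hi
            rw [Finset.mem_erase]
            exact ⟨fun h => hi0 (h ▸ hi.2), Finset.mem_univ _⟩
          calc (Finset.univ.filter fun i => P i ∈ F).card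
              ≤ (Finset.univ.erase i0).card := Finset.card_le_card hsub
            _ = k - 1 := by rw [Finset.card_erase_of_mem (Finset.mem_univ _),
                Finset.card_univ, Fintype.card_fin]
      _ = (k - 1) * N := by rw [Finset.sum_const, smul_eq_mul, mul_comm]
  -- now transfer to ℝ
  have hcpos : ∀ i, 0 < c i := by
    intro i
    rcases Nat.eq_zero_or_pos (c i) with h | h
    · have := hNc i
      rw [h, mul_zero] at this
      exact absurd this hNpos.ne'
    · exact h
  have hchoosepos : ∀ i, 0 < n.choose (j i) := by
    intro i
    rcases Nat.eq_zero_or_pos (n.choose (j i)) with h | h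
    · have := hNc i
      rw [h, zero_mul] at this
      exact absurd this hNpos.ne'
    · exact h
  have hterm : ∀ i : Fin k, ((F.filter fun A => A.card = j i).card : ℝ) / (n.choose (j i))
      = ((S.filter fun P => P i ∈ F).card : ℝ) / N := by
    intro i
    rw [div_eq_div_iff (Nat.cast_pos.mpr (hchoosepos i)).ne' (Nat.cast_pos.mpr hNpos).ne']
    rw [← Nat.cast_mul, ← Nat.cast_mul]
    norm_cast
    rw [hcount i, hNc i]
    ring
  have hfinal : (∑ i, ((S.filter fun P => P i ∈ F).card : ℝ)) ≤ ((k : ℝ) - 1) * N := by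
    have h2 : ((∑ i, (S.filter fun P => P i ∈ F).card : ℕ) : ℝ)
        ≤ (((k - 1) * N : ℕ) : ℝ) := Nat.cast_le.mpr hmain
    rw [Nat.cast_mul, Nat.cast_sub (le_trans one_le_two hk)] at h2
    push_cast at h2
    exact h2
  rw [Finset.sum_congr rfl (fun i _ => hterm i), ← Finset.sum_div]
  rw [div_le_iff₀ (Nat.cast_pos.mpr hNpos)]
  exact hfinal
end

section
/- Let m > ℓ > 0 be integers and set n = 3m − ℓ. The family F consisting of all m-element subsets of [n] together with all (m+ℓ)-element subsets of [n] is 3-partition-free, and for this family |F^{(m−ℓ)}| / binom(n, m−ℓ) + |F^{(m)}| / binom(n, m) + |F^{(m+ℓ)}| / binom(n, m+ℓ) = 2 (so the bound 2 in this inequality for 3-partition-free families is best possible). -/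
lemma card_filter_card_eq (n k : ℕ) :
    (Finset.univ.filter fun A : Finset (Fin n) => A.card = k).card = n.choose k := by
  have : (Finset.univ.filter fun A : Finset (Fin n) => A.card = k)
      = (Finset.univ : Finset (Fin n)).powersetCard k := by
    rw [Finset.powersetCard_eq_filter, Finset.powerset_univ]
  rw [this, Finset.card_powersetCard, Finset.card_univ, Fintype.card_fin]

/-- The family of all `m`-element together with all `(m+ℓ)`-element subsets of
`[n]`, `n = 3m - ℓ`, is `3`-partition-free and achieves the value `2` in the
inequality of Theorem 1, so the bound `2` is best possible. -/
theorem three_partition_free_ineq_sharp (m ℓ : ℕ) (hℓ : 0 < ℓ) (hml : ℓ < m)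
    (n : ℕ) (hn : n = 3 * m - ℓ)
    (F : Finset (Finset (Fin n)))
    (hFdef : F = Finset.univ.filter fun A => A.card = m ∨ A.card = m + ℓ) :
    PartitionFree 3 F ∧
      ((F.filter fun A => A.card = m - ℓ).card : ℝ) / (n.choose (m - ℓ))
        + ((F.filter fun A => A.card = m).card : ℝ) / (n.choose m)
        + ((F.filter fun A => A.card = m + ℓ).card : ℝ) / (n.choose (m + ℓ)) = 2 := by
  constructor
  · rintro ⟨P, hmem, hdisj, hcover⟩
    have hsum : ∑ i : Fin 3, (P i).card = n := by
      have := Finset.card_biUnion (s := (Finset.univ : Finset (Fin 3))) (t := P)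
        (fun i _ j _ hij => hdisj i j hij)
      rw [hcover, Finset.card_univ, Fintype.card_fin] at this
      omega
    have hge : ∀ i : Fin 3, m ≤ (P i).card := by
      intro i
      have := hmem i
      rw [hFdef, Finset.mem_filter] at this
      rcases this.2 with h | h <;> omega
    have h3 : 3 * m ≤ ∑ i : Fin 3, (P i).card := by
      calc 3 * m = ∑ _i : Fin 3, m := by simp [mul_comm]
        _ ≤ _ := Finset.sum_le_sum fun i _ => hge i
    omega
  · have h1 : (F.filter fun A => A.card = m - ℓ) = ∅ := by
      rw [hFdef, Finset.filter_filter]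
      apply Finset.filter_false_of_mem
      intro A _
      omega
    have h2 : (F.filter fun A => A.card = m)
        = Finset.univ.filter fun A : Finset (Fin n) => A.card = m := by
      rw [hFdef, Finset.filter_filter]
      apply Finset.filter_congr
      intro A _
      constructor <;> intro h <;> omega
    have h3 : (F.filter fun A => A.card = m + ℓ)
        = Finset.univ.filter fun A : Finset (Fin n) => A.card = m + ℓ := by
      rw [hFdef, Finset.filter_filter]
      apply Finset.filter_congr
      intro A _
      constructor <;> intro h <;> omega
    rw [h1, h2, h3, card_filter_card_eq, card_filter_card_eq]
    have c2 : (0:ℝ) < n.choose m := by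
      exact_mod_cast Nat.choose_pos (by omega)
    have c3 : (0:ℝ) < n.choose (m + ℓ) := by
      exact_mod_cast Nat.choose_pos (by omega)
    rw [Finset.card_empty]
    field_simp
    ring
end

section
/- Let m > ℓ > 0 be integers, n = 3m − ℓ, and d = gcd(3m − ℓ, m). Let x_1, x_2, ..., x_n be any cyclic arrangement of {1,...,n} (i.e., x is a bijection from {1,...,n} to [n], and indices of x are read modulo n). For r = 1, ..., n/d define the arc B_r = {x_j : (r−1)m < j ≤ rm} (indices mod n), let A_r = {x_j : (r−1)m < j ≤ rm − ℓ} be the arc of the first m − ℓ elements of B_r, let D_r = B_r \ A_r, and let C_r = B_r ∪ D_{r+1} (the index r + 1 taken modulo n/d). If F is a 3-partition-free family of subsets of [n], then |{r : A_r ∈ F}| + |{r : B_r ∈ F}| + |{r : C_r ∈ F}| ≤ 2n/d. -/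
private lemma myInjOn_disjoint {β : Type*} [DecidableEq β] {g : ℕ → β} {U S T : Finset ℕ}
    (hS : S ⊆ U) (hT : T ⊆ U) (hg : ∀ s ∈ U, ∀ t ∈ U, g s = g t → s = t)
    (h : Disjoint S T) : Disjoint (S.image g) (T.image g) := by
  rw [Finset.disjoint_left]
  rintro y hy1 hy2
  obtain ⟨s, hs, rfl⟩ := Finset.mem_image.mp hy1
  obtain ⟨t, ht, hgt⟩ := Finset.mem_image.mp hy2
  have := hg t (hT ht) s (hS hs) hgt
  subst this
  exact (Finset.disjoint_left.mp h hs) ht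

private lemma myInjOn_sdiff {β : Type*} [DecidableEq β] {g : ℕ → β} {U S T : Finset ℕ}
    (hS : S ⊆ U) (hT : T ⊆ U) (hg : ∀ s ∈ U, ∀ t ∈ U, g s = g t → s = t) :
    (S \ T).image g = S.image g \ T.image g := by
  ext y
  simp only [Finset.mem_image, Finset.mem_sdiff]
  constructor
  · rintro ⟨s, ⟨hsS, hsT⟩, rfl⟩
    refine ⟨⟨s, hsS, rfl⟩, ?_⟩
    rintro ⟨t, htT, hgt⟩
    exact hsT (hg t (hT htT) s (hS hsS) hgt ▸ htT)
  · rintro ⟨⟨s, hsS, rfl⟩, hnot⟩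
    exact ⟨s, ⟨hsS, fun hsT => hnot ⟨s, hsT, rfl⟩⟩, rfl⟩

private def phi3 (pa pa2 pb : Prop) [Decidable pa] [Decidable pa2] [Decidable pb] : ℕ :=
  if pa then (if pa2 then 0 else 1) else (if pa2 then (if pb then 1 else 2) else 2)

private lemma phi3_ineq (pa pa2 pa3 pb pb2 pc : Prop)
    [Decidable pa] [Decidable pa2] [Decidable pa3] [Decidable pb] [Decidable pb2] [Decidable pc]
    (h1 : ¬(pb ∧ pb2 ∧ pa3)) (h2 : ¬(pc ∧ pa2 ∧ pa3)) :
    ((if pa then 1 else 0) + (if pb then 1 else 0) + (if pc then 1 else 0)) + phi3 pa pa2 pb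
      ≤ 2 + phi3 pa2 pa3 pb2 := by
  unfold phi3
  split_ifs <;> first | omega | (exfalso; tauto)

private lemma triple_free {n : ℕ} {F : Finset (Finset (Fin n))} (hF : PartitionFree 3 F)
    {X Y Z : Finset (Fin n)} (hX : X ∈ F) (hY : Y ∈ F) (hZ : Z ∈ F)
    (dXY : Disjoint X Y) (dXZ : Disjoint X Z) (dYZ : Disjoint Y Z)
    (hU : X ∪ Y ∪ Z = Finset.univ) : False := by
  apply hF
  refine ⟨![X, Y, Z], ?_, ?_, ?_⟩
  · intro i; fin_cases i <;> simpa
  · intro i j hij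
    fin_cases i <;> fin_cases j <;>
      simp_all <;>
      first
        | exact dXY | exact dXZ | exact dYZ
        | exact dXY.symm | exact dXZ.symm | exact dYZ.symm
  · apply Finset.eq_univ_of_forall
    intro a
    have ha : a ∈ X ∪ Y ∪ Z := hU ▸ Finset.mem_univ a
    rw [Finset.mem_biUnion]
    rcases Finset.mem_union.mp ha with h | h
    · rcases Finset.mem_union.mp h with h | h
      · exact ⟨0, Finset.mem_univ _, h⟩
      · exact ⟨1, Finset.mem_univ _, h⟩
    · exact ⟨2, Finset.mem_univ _, h⟩

/-- **Lemma 2.1.** Let `m > ℓ > 0`, `n = 3m - ℓ`, `d = gcd(n, m)`, and let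
`x : ℤ/nℤ ≃ [n]` be a cyclic arrangement of `[n]` (indices of `x` are read mod `n`).
For `1 ≤ r ≤ n/d` let `B_r = {x_j : (r-1)m < j ≤ rm}` be the arc of `m` consecutive
elements, `A_r = {x_j : (r-1)m < j ≤ rm - ℓ}` the arc of the first `m - ℓ` elements
of `B_r`, `D_r = B_r \ A_r`, and `C_r = B_r ∪ D_{r+1}` (index `r + 1` mod `n/d`).
If `F ⊆ 2^[n]` is `3`-partition-free, then
`|{r : A_r ∈ F}| + |{r : B_r ∈ F}| + |{r : C_r ∈ F}| ≤ 2n/d`. -/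
theorem cyclic_arcs_bound (m ℓ : ℕ) (hℓ : 0 < ℓ) (hml : ℓ < m)
    (n : ℕ) (hn : n = 3 * m - ℓ) (d : ℕ) (hd : d = Nat.gcd n m)
    (x : ZMod n ≃ Fin n)
    (B A D C : ℕ → Finset (Fin n))
    (hB : ∀ r, B r = (Finset.Icc 1 m).image fun s => x (((r - 1) * m + s : ℕ) : ZMod n))
    (hA : ∀ r, A r = (Finset.Icc 1 (m - ℓ)).image fun s => x (((r - 1) * m + s : ℕ) : ZMod n))
    (hD : ∀ r, D r = B r \ A r)
    (hC : ∀ r, C r = B r ∪ D (r % (n / d) + 1))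
    (F : Finset (Finset (Fin n))) (hF : PartitionFree 3 F) :
    ((Finset.Icc 1 (n / d)).filter fun r => A r ∈ F).card
      + ((Finset.Icc 1 (n / d)).filter fun r => B r ∈ F).card
      + ((Finset.Icc 1 (n / d)).filter fun r => C r ∈ F).card ≤ 2 * (n / d) := by
  have hm0 : 0 < m := hℓ.trans hml
  have hn0 : 0 < n := by omega
  haveI : NeZero n := ⟨hn0.ne'⟩
  set N := n / d with hNdef
  have hdn : d ∣ n := hd ▸ Nat.gcd_dvd_left n m
  have hdm : d ∣ m := hd ▸ Nat.gcd_dvd_right n m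
  have hd0 : 0 < d := Nat.pos_of_dvd_of_pos hdm hm0
  have hN0 : 0 < N := Nat.div_pos (Nat.le_of_dvd hn0 hdn) hd0
  have hnNm : n ∣ N * m := by
    obtain ⟨k, hk⟩ := hdm
    refine ⟨k, ?_⟩
    calc N * m = (n / d) * (d * k) := by rw [hk]
    _ = ((n / d) * d) * k := by ring
    _ = n * k := by rw [Nat.div_mul_cancel hdn]
  -- periodicity of the index casts modulo N
  have hcast : ∀ r r' : ℕ, 1 ≤ r → 1 ≤ r' → r ≡ r' [MOD N] → ∀ s : ℕ,
      (((r - 1) * m + s : ℕ) : ZMod n) = (((r' - 1) * m + s : ℕ) : ZMod n) := by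
    intro r r' hr hr' hrr' s
    rw [ZMod.natCast_eq_natCast_iff]
    have h1 : r - 1 ≡ r' - 1 [MOD N] := by
      apply Nat.ModEq.add_right_cancel' 1
      have e1 : r - 1 + 1 = r := by omega
      have e2 : r' - 1 + 1 = r' := by omega
      rw [e1, e2]; exact hrr'
    have h2 : (r - 1) * m ≡ (r' - 1) * m [MOD N * m] := h1.mul_right' m
    exact (h2.of_dvd hnNm).add_right s
  have hAper : ∀ r r' : ℕ, 1 ≤ r → 1 ≤ r' → r ≡ r' [MOD N] → A r = A r' := by
    intro r r' hr hr' hrr'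
    rw [hA, hA]
    have : (fun s => x (((r - 1) * m + s : ℕ) : ZMod n))
        = fun s => x (((r' - 1) * m + s : ℕ) : ZMod n) :=
      funext fun s => congrArg x (hcast r r' hr hr' hrr' s)
    rw [this]
  have hBper : ∀ r r' : ℕ, 1 ≤ r → 1 ≤ r' → r ≡ r' [MOD N] → B r = B r' := by
    intro r r' hr hr' hrr'
    rw [hB, hB]
    have : (fun s => x (((r - 1) * m + s : ℕ) : ZMod n))
        = fun s => x (((r' - 1) * m + s : ℕ) : ZMod n) :=
      funext fun s => congrArg x (hcast r r' hr hr' hrr' s)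
    rw [this]
  -- injectivity of s ↦ x (p + s) on Icc 1 n
  have hInj : ∀ p : ℕ, ∀ s ∈ Finset.Icc 1 n, ∀ t ∈ Finset.Icc 1 n,
      x ((p + s : ℕ) : ZMod n) = x ((p + t : ℕ) : ZMod n) → s = t := by
    intro p s hs t ht hxy
    have h1 : ((p + s : ℕ) : ZMod n) = ((p + t : ℕ) : ZMod n) := x.injective hxy
    push_cast at h1
    have h2 : (s : ZMod n) = (t : ZMod n) := by
      exact add_left_cancel h1
    have h3 : s % n = t % n := (ZMod.natCast_eq_natCast_iff' s t n).mp h2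
    simp only [Finset.mem_Icc] at hs ht
    rcases Nat.lt_or_ge s n with h | h <;> rcases Nat.lt_or_ge t n with h' | h'
    · rwa [Nat.mod_eq_of_lt h, Nat.mod_eq_of_lt h'] at h3
    · have : t = n := le_antisymm ht.2 h'
      subst this
      rw [Nat.mod_eq_of_lt h, Nat.mod_self] at h3; omega
    · have : s = n := le_antisymm hs.2 h
      subst this
      rw [Nat.mod_eq_of_lt h', Nat.mod_self] at h3; omega
    · omega
  -- the geometric facts for the two kinds of partitions
  have hgeom : ∀ r : ℕ, 1 ≤ r →
      (Disjoint (B r) (B (r + 1)) ∧ Disjoint (B r) (A (r + 2)) ∧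
        Disjoint (B (r + 1)) (A (r + 2)) ∧ B r ∪ B (r + 1) ∪ A (r + 2) = Finset.univ) ∧
      (Disjoint (B r ∪ (B (r + 1) \ A (r + 1))) (A (r + 1)) ∧
        Disjoint (B r ∪ (B (r + 1) \ A (r + 1))) (A (r + 2)) ∧
        Disjoint (A (r + 1)) (A (r + 2)) ∧
        (B r ∪ (B (r + 1) \ A (r + 1))) ∪ A (r + 1) ∪ A (r + 2) = Finset.univ) := by
    intro r hr
    set G : ℕ → Fin n := fun s => x (((r - 1) * m + s : ℕ) : ZMod n) with hG
    have hIr := hInj ((r - 1) * m)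
    have hIr' : ∀ s ∈ Finset.Icc 1 n, ∀ t ∈ Finset.Icc 1 n, G s = G t → s = t := hIr
    -- arc descriptions
    have hshift : ∀ (k L : ℕ) (f : ℕ → ℕ), (∀ s, f s = (r - 1) * m + (k + s)) →
        (Finset.Icc 1 L).image (fun s => x ((f s : ℕ) : ZMod n))
          = (Finset.Icc (k + 1) (k + L)).image G := by
      intro k L f hf
      have e1 : (fun s => x ((f s : ℕ) : ZMod n)) = fun s => G (k + s) :=
        funext fun s => congrArg x (congrArg Nat.cast (hf s))
      rw [e1, ← Finset.image_add_left_Icc, Finset.image_image]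
      rfl
    have hBr : B r = (Finset.Icc 1 m).image G := by rw [hB]
    have hBr1 : B (r + 1) = (Finset.Icc (m + 1) (m + m)).image G := by
      rw [hB]
      refine hshift m m _ (fun s => ?_)
      have h : r + 1 - 1 = (r - 1) + 1 := by omega
      rw [h, add_mul, one_mul]; ring
    have hAr1 : A (r + 1) = (Finset.Icc (m + 1) (m + (m - ℓ))).image G := by
      rw [hA]
      refine hshift m (m - ℓ) _ (fun s => ?_)
      have h : r + 1 - 1 = (r - 1) + 1 := by omega
      rw [h, add_mul, one_mul]; ring
    have hAr2 : A (r + 2) = (Finset.Icc (2 * m + 1) (2 * m + (m - ℓ))).image G := by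
      rw [hA]
      refine hshift (2 * m) (m - ℓ) _ (fun s => ?_)
      have h : r + 2 - 1 = (r - 1) + 2 := by omega
      rw [h, add_mul]; ring
    have hsub1 : Finset.Icc 1 m ⊆ Finset.Icc 1 n := Finset.Icc_subset_Icc le_rfl (by omega)
    have hsub2 : Finset.Icc (m + 1) (m + m) ⊆ Finset.Icc 1 n :=
      Finset.Icc_subset_Icc (by omega) (by omega)
    have hsub2a : Finset.Icc (m + 1) (m + (m - ℓ)) ⊆ Finset.Icc 1 n :=
      Finset.Icc_subset_Icc (by omega) (by omega)
    have hsub3 : Finset.Icc (2 * m + 1) (2 * m + (m - ℓ)) ⊆ Finset.Icc 1 n :=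
      Finset.Icc_subset_Icc (by omega) (by omega)
    have hunivG : (Finset.Icc 1 n).image G = Finset.univ := by
      apply Finset.eq_univ_of_card
      rw [Finset.card_image_of_injOn
        (fun s hs t ht h => hIr' s (Finset.mem_coe.mp hs) t (Finset.mem_coe.mp ht) h)]
      simp [Nat.card_Icc]
    have hdisjIcc : ∀ a b c e : ℕ, b < c → Disjoint (Finset.Icc a b) (Finset.Icc c e) := by
      intro a b c e hbc
      rw [Finset.disjoint_left]
      intro t ht ht'
      simp only [Finset.mem_Icc] at ht ht'
      omega
    have hDr1 : B (r + 1) \ A (r + 1)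
        = ((Finset.Icc (m + 1) (m + m)) \ (Finset.Icc (m + 1) (m + (m - ℓ)))).image G := by
      rw [hBr1, hAr1, myInjOn_sdiff hsub2 hsub2a hIr']
    have hsdiffIcc : (Finset.Icc (m + 1) (m + m)) \ (Finset.Icc (m + 1) (m + (m - ℓ)))
        = Finset.Icc (m + (m - ℓ) + 1) (m + m) := by
      ext t
      simp only [Finset.mem_sdiff, Finset.mem_Icc]
      omega
    constructor
    · refine ⟨?_, ?_, ?_, ?_⟩
      · rw [hBr, hBr1]
        exact myInjOn_disjoint hsub1 hsub2 hIr' (hdisjIcc _ _ _ _ (by omega))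
      · rw [hBr, hAr2]
        exact myInjOn_disjoint hsub1 hsub3 hIr' (hdisjIcc _ _ _ _ (by omega))
      · rw [hBr1, hAr2]
        exact myInjOn_disjoint hsub2 hsub3 hIr' (hdisjIcc _ _ _ _ (by omega))
      · rw [hBr, hBr1, hAr2, ← Finset.image_union, ← Finset.image_union, ← hunivG]
        congr 1
        ext t
        simp only [Finset.mem_union, Finset.mem_Icc]
        omega
    · rw [hDr1, hsdiffIcc]
      have hsubD : Finset.Icc (m + (m - ℓ) + 1) (m + m) ⊆ Finset.Icc 1 n :=
        Finset.Icc_subset_Icc (by omega) (by omega)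
      refine ⟨?_, ?_, ?_, ?_⟩
      · rw [hBr, hAr1, ← Finset.image_union]
        apply myInjOn_disjoint (Finset.union_subset hsub1 hsubD) hsub2a hIr'
        rw [Finset.disjoint_left]
        intro t ht ht'
        simp only [Finset.mem_union, Finset.mem_Icc] at ht ht'
        omega
      · rw [hBr, hAr2, ← Finset.image_union]
        apply myInjOn_disjoint (Finset.union_subset hsub1 hsubD) hsub3 hIr'
        rw [Finset.disjoint_left]
        intro t ht ht'
        simp only [Finset.mem_union, Finset.mem_Icc] at ht ht'
        omega
      · rw [hAr1, hAr2]
        exact myInjOn_disjoint hsub2a hsub3 hIr' (hdisjIcc _ _ _ _ (by omega))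
      · rw [hBr, hAr1, hAr2, ← Finset.image_union, ← Finset.image_union,
          ← Finset.image_union, ← hunivG]
        congr 1
        ext t
        simp only [Finset.mem_union, Finset.mem_Icc]
        omega
  -- cyclic successor
  set σ : ℕ → ℕ := fun r => r % N + 1 with hσ
  have hmq : ∀ k : ℕ, σ k ≡ k + 1 [MOD N] := fun k => (Nat.mod_modEq k N).add_right 1
  have hσ1 : ∀ r, 1 ≤ σ r := fun r => by simp [hσ]
  have hσσ : ∀ r : ℕ, σ (σ r) ≡ r + 2 [MOD N] := by
    intro r
    have h1 : σ (σ r) ≡ σ r + 1 [MOD N] := hmq (σ r)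
    have h2 : σ r + 1 ≡ (r + 1) + 1 [MOD N] := (hmq r).add_right 1
    have e : r + 1 + 1 = r + 2 := by omega
    exact h1.trans (e ▸ h2)
  -- the two families of constraints
  have hK1 : ∀ r ∈ Finset.Icc 1 N, ¬(B r ∈ F ∧ B (σ r) ∈ F ∧ A (σ (σ r)) ∈ F) := by
    rintro r hrIcc ⟨h1, h2, h3⟩
    simp only [Finset.mem_Icc] at hrIcc
    have hr : 1 ≤ r := hrIcc.1
    have e1 : B (σ r) = B (r + 1) := hBper _ _ (hσ1 r) (by omega) (hmq r)
    have e2 : A (σ (σ r)) = A (r + 2) := hAper _ _ (hσ1 (σ r)) (by omega) (hσσ r)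
    obtain ⟨⟨d1, d2, d3, hU⟩, -⟩ := hgeom r hr
    exact triple_free hF h1 (e1 ▸ h2) (e2 ▸ h3) d1 d2 d3 hU
  have hK2 : ∀ r ∈ Finset.Icc 1 N, ¬(C r ∈ F ∧ A (σ r) ∈ F ∧ A (σ (σ r)) ∈ F) := by
    rintro r hrIcc ⟨h1, h2, h3⟩
    simp only [Finset.mem_Icc] at hrIcc
    have hr : 1 ≤ r := hrIcc.1
    have e1 : A (σ r) = A (r + 1) := hAper _ _ (hσ1 r) (by omega) (hmq r)
    have e1B : B (σ r) = B (r + 1) := hBper _ _ (hσ1 r) (by omega) (hmq r)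
    have e2 : A (σ (σ r)) = A (r + 2) := hAper _ _ (hσ1 (σ r)) (by omega) (hσσ r)
    have eC : C r = B r ∪ (B (r + 1) \ A (r + 1)) := by
      rw [hC, hD, e1B, e1]
    obtain ⟨-, ⟨d1, d2, d3, hU⟩⟩ := hgeom r hr
    exact triple_free hF (eC ▸ h1) (e1 ▸ h2) (e2 ▸ h3) d1 d2 d3 hU
  -- the counting argument via a potential function
  classical
  set Φ : ℕ → ℕ := fun r => phi3 (A r ∈ F) (A (σ r) ∈ F) (B r ∈ F) with hΦ
  have key : ∀ r ∈ Finset.Icc 1 N,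
      ((if A r ∈ F then 1 else 0) + (if B r ∈ F then 1 else 0)
        + (if C r ∈ F then 1 else 0)) + Φ r ≤ 2 + Φ (σ r) := by
    intro r hr
    have h1 : ¬((B r ∈ F) ∧ (B (σ r) ∈ F) ∧ (A (σ (σ r)) ∈ F)) := hK1 r hr
    have h2 : ¬((C r ∈ F) ∧ (A (σ r) ∈ F) ∧ (A (σ (σ r)) ∈ F)) := hK2 r hr
    exact phi3_ineq (A r ∈ F) (A (σ r) ∈ F) (A (σ (σ r)) ∈ F)
      (B r ∈ F) (B (σ r) ∈ F) (C r ∈ F) h1 h2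
  have hσmem : ∀ r ∈ Finset.Icc 1 N, σ r ∈ Finset.Icc 1 N := by
    intro r hr
    simp only [Finset.mem_Icc]
    have := Nat.mod_lt r hN0
    simp only [hσ]
    omega
  have hbij : ∑ r ∈ Finset.Icc 1 N, Φ (σ r) = ∑ r ∈ Finset.Icc 1 N, Φ r := by
    refine Finset.sum_nbij' σ (fun r => if r = 1 then N else r - 1) hσmem ?_ ?_ ?_ ?_
    · intro r hr
      simp only [Finset.mem_Icc] at hr ⊢
      split <;> omega
    · intro r hr
      simp only [Finset.mem_Icc] at hr
      rcases Nat.lt_or_ge r N with h | h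
      · have : r % N = r := Nat.mod_eq_of_lt h
        simp only [hσ, this]
        split <;> omega
      · have hrN : r = N := by omega
        subst hrN
        simp [hσ, Nat.mod_self]
    · intro r hr
      simp only [Finset.mem_Icc] at hr
      rcases Nat.eq_or_lt_of_le hr.1 with h | h
      · simp only [← h]
        simp [hσ, Nat.mod_self]
      · have h1 : ¬(r = 1) := by omega
        simp only [h1, if_false, hσ]
        have : (r - 1) % N = r - 1 := Nat.mod_eq_of_lt (by omega)
        rw [this]
        omega
    · intro r hr; rfl
  have hsum := Finset.sum_le_sum key
  have h1 : ∑ r ∈ Finset.Icc 1 N,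
      (((if A r ∈ F then 1 else 0) + (if B r ∈ F then 1 else 0)
        + (if C r ∈ F then 1 else 0)) + Φ r)
      = (∑ r ∈ Finset.Icc 1 N, ((if A r ∈ F then 1 else 0) + (if B r ∈ F then 1 else 0)
        + (if C r ∈ F then 1 else 0))) + ∑ r ∈ Finset.Icc 1 N, Φ r :=
    Finset.sum_add_distrib
  have h2 : ∑ r ∈ Finset.Icc 1 N, (2 + Φ (σ r))
      = 2 * N + ∑ r ∈ Finset.Icc 1 N, Φ r := by
    rw [Finset.sum_add_distrib, hbij, Finset.sum_const, Nat.card_Icc]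
    have e : N + 1 - 1 = N := by omega
    rw [e, smul_eq_mul, Nat.mul_comm]
  rw [h1, h2] at hsum
  have hsum2 : ∑ r ∈ Finset.Icc 1 N,
      ((if A r ∈ F then 1 else 0) + (if B r ∈ F then 1 else 0)
        + (if C r ∈ F then 1 else 0)) ≤ 2 * N := by omega
  have hsplit : ∑ r ∈ Finset.Icc 1 N,
      ((if A r ∈ F then 1 else 0) + (if B r ∈ F then 1 else 0)
        + (if C r ∈ F then 1 else 0))
      = (∑ r ∈ Finset.Icc 1 N, if A r ∈ F then 1 else 0)
        + (∑ r ∈ Finset.Icc 1 N, if B r ∈ F then 1 else 0)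
        + (∑ r ∈ Finset.Icc 1 N, if C r ∈ F then 1 else 0) := by
    rw [Finset.sum_add_distrib, Finset.sum_add_distrib]
  rw [Finset.card_filter, Finset.card_filter, Finset.card_filter]
  omega
end

section
/- Let m > ℓ > 0 and k ≥ 3 be integers, n = km − ℓ, d = gcd(n, m), and n̄ = n/d. Let x_1, ..., x_n be a cyclic arrangement of [n] and for r ∈ Z/n̄Z let B_r = {x_j : (r−1)m < j ≤ rm} (indices of x mod n), A_r the arc of the first m − ℓ elements of B_r, D_r = B_r \ A_r, and for 1 ≤ j ≤ k − 2 let C_r(j) = B_r ∪ D_{r+j} (the index r + j taken mod n̄). Fix r and define the k − 1 groups of sets G_1 = {A_r, B_{r−1}} and, for 2 ≤ s ≤ k − 1, G_s = {A_{r−s+1}, B_{r−s}} ∪ {C_{r−s}(j) : 1 ≤ j ≤ s − 1} (all indices mod n̄). Suppose that for each s with 1 ≤ s ≤ k − 1 we are given H_s ⊆ G_s such that one cannot choose k pairwise disjoint members of H_1 ∪ ... ∪ H_{k−1} whose union is A_r ∪ B_{r−1} ∪ ... ∪ B_{r−k+1}. Then there exists an integer t with 1 ≤ t ≤ k − 1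 such that the sum over s = 1,...,t of |G_s \ H_s| is at least t. -/
open Finset

namespace MissingSetsAux

variable {α : Type*} [DecidableEq α]

/-- one step of the greedy construction, processing block `s` (blocks are processed
downward from `N` to `1`).  State: (pending blocks, partial assignment). -/
def gstep (SA SB : ℕ → Finset α) (SC : ℕ → ℕ → Finset α) (H : ℕ → Finset (Finset α))
    (s : ℕ) (st : Finset ℕ × (ℕ → Finset α)) : Finset ℕ × (ℕ → Finset α) :=
  if h : (st.1.filter fun f => SC f s ∈ H f).Nonempty ∧ SA s ∈ H (s + 1) then
    (st.1.erase ((st.1.filter fun f => SC f s ∈ H f).min' h.1),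
      fun t =>
        if t = s then SA s
        else if t = (st.1.filter fun f => SC f s ∈ H f).min' h.1 then
          SC ((st.1.filter fun f => SC f s ∈ H f).min' h.1) s
        else st.2 t)
  else if SB s ∈ H s then (st.1, fun t => if t = s then SB s else st.2 t)
  else (insert s st.1, st.2)

/-- state after processing `i` blocks (`N, N-1, ..., N-i+1`). -/
def gSt (SA SB : ℕ → Finset α) (SC : ℕ → ℕ → Finset α) (H : ℕ → Finset (Finset α))
    (N : ℕ) : ℕ → Finset ℕ × (ℕ → Finset α)
  | 0 => (∅, fun _ => ∅)
  | (i + 1) => gstep SA SB SC H (N - i) (gSt SA SB SC H N i)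

variable (SA SB : ℕ → Finset α) (SC : ℕ → ℕ → Finset α) (H : ℕ → Finset (Finset α))

lemma gstep_branch (s : ℕ) (st : Finset ℕ × (ℕ → Finset α)) :
    (∃ fm, fm ∈ st.1 ∧ SC fm s ∈ H fm ∧
      (∀ f' ∈ st.1, SC f' s ∈ H f' → fm ≤ f') ∧ SA s ∈ H (s + 1) ∧
      gstep SA SB SC H s st =
        (st.1.erase fm, fun t => if t = s then SA s else if t = fm then SC fm s else st.2 t))
    ∨ (¬((st.1.filter fun f => SC f s ∈ H f).Nonempty ∧ SA s ∈ H (s + 1)) ∧ SB s ∈ H s ∧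
        gstep SA SB SC H s st = (st.1, fun t => if t = s then SB s else st.2 t))
    ∨ (¬((st.1.filter fun f => SC f s ∈ H f).Nonempty ∧ SA s ∈ H (s + 1)) ∧ SB s ∉ H s ∧
        gstep SA SB SC H s st = (insert s st.1, st.2)) := by
  unfold gstep
  split_ifs with h1 h2
  · refine Or.inl ⟨(st.1.filter fun f => SC f s ∈ H f).min' h1.1, ?_, ?_, ?_, h1.2, rfl⟩
    · exact (Finset.mem_filter.mp (Finset.min'_mem _ h1.1)).1
    · exact (Finset.mem_filter.mp (Finset.min'_mem _ h1.1)).2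
    · exact fun f' hf' hc => Finset.min'_le _ _ (Finset.mem_filter.mpr ⟨hf', hc⟩)
  · exact Or.inr (Or.inl ⟨h1, h2, rfl⟩)
  · exact Or.inr (Or.inr ⟨h1, h2, rfl⟩)

variable (N : ℕ)

/-- pending blocks always lie in `(N-i, N]`. -/
lemma pend_sub : ∀ i, i ≤ N → (gSt SA SB SC H N i).1 ⊆ Finset.Ioc (N - i) N := by
  intro i
  induction i with
  | zero => intro _; simp [gSt]
  | succ i ih =>
    intro hi
    rcases gstep_branch SA SB SC H (N - i) (gSt SA SB SC H N i) with
      ⟨fm, hfm, _, _, _, heq⟩ | ⟨_, _, heq⟩ | ⟨_, _, heq⟩ <;>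
      rw [gSt, heq]
    · refine (Finset.erase_subset _ _).trans ((ih (by omega)).trans ?_)
      intro t ht; simp only [Finset.mem_Ioc] at *; omega
    · refine (ih (by omega)).trans ?_
      intro t ht; simp only [Finset.mem_Ioc] at *; omega
    · intro t ht
      rcases Finset.mem_insert.mp ht with rfl | ht
      · simp only [Finset.mem_Ioc]; omega
      · have := ih (by omega) ht; simp only [Finset.mem_Ioc] at *; omega

/-- pending blocks have missing `B`. -/
lemma pend_B : ∀ i, ∀ f ∈ (gSt SA SB SC H N i).1, SB f ∉ H f := by
  intro i
  induction i with
  | zero => simp [gSt]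
  | succ i ih =>
    intro f hf
    rcases gstep_branch SA SB SC H (N - i) (gSt SA SB SC H N i) with
      ⟨fm, hfm, _, _, _, heq⟩ | ⟨_, _, heq⟩ | ⟨_, hB, heq⟩ <;> rw [gSt, heq] at hf
    · exact ih f (Finset.mem_of_mem_erase hf)
    · exact ih f hf
    · rcases Finset.mem_insert.mp hf with rfl | hf
      · exact hB
      · exact ih f hf

/-- membership persists downward (except at a block's own step). -/
lemma mem_pend_pred (i : ℕ) (f : ℕ) (hf : f ∈ (gSt SA SB SC H N (i + 1)).1)
    (hne : N - i ≠ f) : f ∈ (gSt SA SB SC H N i).1 := by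
  rcases gstep_branch SA SB SC H (N - i) (gSt SA SB SC H N i) with
    ⟨fm, hfm, _, _, _, heq⟩ | ⟨_, _, heq⟩ | ⟨_, _, heq⟩ <;> rw [gSt, heq] at hf
  · exact Finset.mem_of_mem_erase hf
  · exact hf
  · rcases Finset.mem_insert.mp hf with rfl | hf
    · exact absurd rfl hne
    · exact hf

/-- absence persists upward (except at a block's own step). -/
lemma absent_mono (f : ℕ) : ∀ i j, i ≤ j → f ∉ (gSt SA SB SC H N i).1 →
    (∀ jj, i ≤ jj → jj < j → N - jj ≠ f) → f ∉ (gSt SA SB SC H N j).1 := by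
  intro i j
  induction j with
  | zero =>
    intro hij h _
    have : i = 0 := by omega
    subst this; exact h
  | succ j ih =>
    intro hij h hjj
    rcases Nat.lt_or_ge i (j + 1) with hlt | hge
    · have hj : f ∉ (gSt SA SB SC H N j).1 :=
        ih (by omega) h (fun jj h1 h2 => hjj jj h1 (by omega))
      have hne : N - j ≠ f := hjj j (by omega) (by omega)
      rcases gstep_branch SA SB SC H (N - j) (gSt SA SB SC H N j) with
        ⟨fm, hfm, _, _, _, heq⟩ | ⟨_, _, heq⟩ | ⟨_, _, heq⟩ <;> rw [gSt, heq]
      · exact fun hc => hj (Finset.mem_of_mem_erase hc)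
      · exact hj
      · intro hc
        rcases Finset.mem_insert.mp hc with rfl | hc
        · exact hne rfl
        · exact hj hc
    · have : i = j + 1 := by omega
      subst this; exact h


lemma gInv
    (hsub : ∀ s, 1 ≤ s → s ≤ N → SA s ⊆ SB s)
    (hCeq : ∀ f s, 1 ≤ s → s < f → f ≤ N → SC f s = SB f ∪ (SB s \ SA s))
    (hdBB : ∀ s t, 1 ≤ s → s ≤ N → 1 ≤ t → t ≤ N → s ≠ t → Disjoint (SB s) (SB t)) :
    ∀ i, i ≤ N →
      (∀ t ∈ Finset.Ioc (N - i) N \ (gSt SA SB SC H N i).1,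
          ∃ g, 1 ≤ g ∧ g ≤ N ∧ (gSt SA SB SC H N i).2 t ∈ H g) ∧
      (∀ t ∈ Finset.Ioc (N - i) N \ (gSt SA SB SC H N i).1,
        ∀ t' ∈ Finset.Ioc (N - i) N \ (gSt SA SB SC H N i).1,
          t ≠ t' → Disjoint ((gSt SA SB SC H N i).2 t) ((gSt SA SB SC H N i).2 t')) ∧
      ((Finset.Ioc (N - i) N \ (gSt SA SB SC H N i).1).biUnion (gSt SA SB SC H N i).2
        = (Finset.Ioc (N - i) N \ (gSt SA SB SC H N i).1).biUnion SB) := by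
  intro i
  induction i with
  | zero =>
    intro _
    refine ⟨?_, ?_, ?_⟩ <;> simp [gSt]
  | succ i ih =>
    intro hi1
    obtain ⟨ihm, ihd, ihu⟩ := ih (by omega)
    clear ih
    have hpsub := pend_sub SA SB SC H N i (by omega)
    have hs1 : 1 ≤ N - i := by omega
    have hsN : N - i ≤ N := by omega
    set st := gSt SA SB SC H N i with hst
    set s := N - i with hsdef
    have hNi1 : N - (i+1) = s - 1 := by omega
    have hsnp : s ∉ st.1 := by
      intro hc
      have := Finset.mem_Ioc.mp (hpsub hc); omega
    have hgst : gSt SA SB SC H N (i+1) = gstep SA SB SC H s st := by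
      rw [gSt]
    -- asg-subset fact from IH union
    have hasg_sub : ∀ t ∈ Finset.Ioc s N \ st.1, st.2 t ⊆
        (Finset.Ioc s N \ st.1).biUnion SB := by
      intro t ht
      rw [← ihu]
      exact Finset.subset_biUnion_of_mem st.2 ht
    have hdisj_BB : ∀ u, 1 ≤ u → u ≤ N →
        (∀ t' ∈ Finset.Ioc s N \ st.1, t' ≠ u) →
        Disjoint (SB u) ((Finset.Ioc s N \ st.1).biUnion SB) := by
      intro u hu1 hu2 hne
      rw [Finset.disjoint_biUnion_right]
      intro t' ht'
      have ht'm := Finset.mem_Ioc.mp (Finset.mem_sdiff.mp ht').1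
      exact hdBB u t' hu1 hu2 (by omega) ht'm.2 (fun hc => hne t' ht' hc.symm)
    rcases gstep_branch SA SB SC H s st with
      ⟨fm, hfm, hfmC, hfmmin, hAH, heq⟩ | ⟨hnc, hBH, heq⟩ | ⟨hnc, hBH, heq⟩
    · -- pair branch
      have hfmIoc := Finset.mem_Ioc.mp (hpsub hfm)
      have hsfm : s < fm := hfmIoc.1
      have hfmN : fm ≤ N := hfmIoc.2
      have hi0 : i ≠ 0 := by
        rintro rfl
        simp [gSt] at hst
        rw [hst] at hfm
        simp at hfm
      have hsN' : s + 1 ≤ N := by omega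
      have hDm' : Finset.Ioc (s-1) N \ (st.1.erase fm)
          = insert s (insert fm (Finset.Ioc s N \ st.1)) := by
        ext t
        simp only [Finset.mem_sdiff, Finset.mem_Ioc, Finset.mem_erase, Finset.mem_insert]
        constructor
        · rintro ⟨⟨ht1, ht2⟩, ht3⟩
          by_cases hts : t = s
          · exact Or.inl hts
          by_cases htf : t = fm
          · exact Or.inr (Or.inl htf)
          · exact Or.inr (Or.inr ⟨⟨by omega, ht2⟩, fun hc => ht3 ⟨htf, hc⟩⟩)
        · rintro (rfl | rfl | ⟨⟨ht1, ht2⟩, ht3⟩)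
          · exact ⟨⟨by omega, by omega⟩, fun hc => hsnp hc.2⟩
          · exact ⟨⟨by omega, by omega⟩, fun hc => hc.1 rfl⟩
          · exact ⟨⟨by omega, ht2⟩, fun hc => ht3 hc.2⟩
      have hfm_ne_s : fm ≠ s := by omega
      have hcong : ∀ t ∈ Finset.Ioc s N \ st.1,
          (gSt SA SB SC H N (i+1)).2 t = st.2 t := by
        intro t ht
        obtain ⟨htI, htp⟩ := Finset.mem_sdiff.mp ht
        have ht1 := Finset.mem_Ioc.mp htI
        rw [hgst, heq]
        simp only
        rw [if_neg (by omega), if_neg (show ¬ t = fm by rintro rfl; exact htp hfm)]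
      have hvs : (gSt SA SB SC H N (i+1)).2 s = SA s := by
        rw [hgst, heq]; simp
      have hvf : (gSt SA SB SC H N (i+1)).2 fm = SC fm s := by
        rw [hgst, heq]; simp [hfm_ne_s]
      have hpend' : (gSt SA SB SC H N (i+1)).1 = st.1.erase fm := by
        rw [hgst, heq]
      have hDM : Finset.Ioc (N - (i+1)) N \ (gSt SA SB SC H N (i+1)).1
          = insert s (insert fm (Finset.Ioc s N \ st.1)) := by
        rw [hpend', hNi1, hDm']
      have hCval : SC fm s = SB fm ∪ (SB s \ SA s) := hCeq fm s hs1 hsfm hfmN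
      have hAsubB : SA s ⊆ SB s := hsub s hs1 hsN
      have hdsB : Disjoint (SB s) ((Finset.Ioc s N \ st.1).biUnion SB) := by
        refine hdisj_BB s hs1 hsN ?_
        intro t' ht'
        have := Finset.mem_Ioc.mp (Finset.mem_sdiff.mp ht').1
        omega
      have hdfB : Disjoint (SB fm) ((Finset.Ioc s N \ st.1).biUnion SB) := by
        refine hdisj_BB fm (by omega) hfmN ?_
        intro t' ht' hc
        exact (Finset.mem_sdiff.mp ht').2 (hc ▸ hfm)
      have hdsf : Disjoint (SB s) (SB fm) := hdBB s fm hs1 hsN (by omega) hfmN (by omega)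
      -- values disjointness helpers
      have hdAs_f : Disjoint (SA s) (SC fm s) := by
        rw [hCval, Finset.disjoint_union_right]
        exact ⟨Finset.disjoint_of_subset_left hAsubB hdsf, Finset.disjoint_sdiff⟩
      have hdAs_t : ∀ t ∈ Finset.Ioc s N \ st.1, Disjoint (SA s) (st.2 t) := by
        intro t ht
        exact Finset.disjoint_of_subset_left hAsubB
          (Finset.disjoint_of_subset_right (hasg_sub t ht) hdsB)
      have hdC_t : ∀ t ∈ Finset.Ioc s N \ st.1, Disjoint (SC fm s) (st.2 t) := by
        intro t ht
        refine Finset.disjoint_of_subset_right (hasg_sub t ht) ?_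
        rw [hCval, Finset.disjoint_union_left]
        exact ⟨hdfB, Finset.disjoint_of_subset_left Finset.sdiff_subset hdsB⟩
      have hval : ∀ u, u ∈ insert s (insert fm (Finset.Ioc s N \ st.1)) →
          ((u = s ∧ (gSt SA SB SC H N (i+1)).2 u = SA s) ∨
           (u = fm ∧ (gSt SA SB SC H N (i+1)).2 u = SC fm s) ∨
           (u ∈ Finset.Ioc s N \ st.1 ∧ (gSt SA SB SC H N (i+1)).2 u = st.2 u)) := by
        intro u hu
        by_cases h1 : u = s
        · exact Or.inl ⟨h1, by rw [h1, hvs]⟩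
        by_cases h2 : u = fm
        · exact Or.inr (Or.inl ⟨h2, by rw [h2, hvf]⟩)
        · have huD : u ∈ Finset.Ioc s N \ st.1 := by
            simp only [Finset.mem_insert, h1, h2, false_or] at hu; exact hu
          exact Or.inr (Or.inr ⟨huD, hcong u huD⟩)
      refine ⟨?_, ?_, ?_⟩
      · intro t ht
        rw [hDM] at ht
        rcases hval t ht with ⟨he, hv⟩ | ⟨he, hv⟩ | ⟨hm, hv⟩
        · exact ⟨s + 1, by omega, hsN', by rw [hv]; exact hAH⟩
        · exact ⟨fm, by omega, hfmN, by rw [hv]; exact hfmC⟩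
        · obtain ⟨g, h1, h2, h3⟩ := ihm t hm
          exact ⟨g, h1, h2, by rw [hv]; exact h3⟩
      · intro t ht t' ht' hne
        rw [hDM] at ht ht'
        rcases hval t ht with ⟨he, hv⟩ | ⟨he, hv⟩ | ⟨hm, hv⟩ <;>
          rcases hval t' ht' with ⟨he', hv'⟩ | ⟨he', hv'⟩ | ⟨hm', hv'⟩ <;>
          rw [hv, hv']
        · exact absurd (he.trans he'.symm) hne
        · exact hdAs_f
        · exact hdAs_t t' hm'
        · exact hdAs_f.symm
        · exact absurd (he.trans he'.symm) hne
        · exact hdC_t t' hm'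
        · exact (hdAs_t t hm).symm
        · exact (hdC_t t hm).symm
        · exact ihd t hm t' hm' hne
      · rw [hDM, Finset.biUnion_insert, Finset.biUnion_insert,
          Finset.biUnion_insert, Finset.biUnion_insert, hvs, hvf]
        have hbu : (Finset.Ioc s N \ st.1).biUnion (gSt SA SB SC H N (i+1)).2
            = (Finset.Ioc s N \ st.1).biUnion SB :=
          (Finset.biUnion_congr rfl hcong).trans ihu
        rw [hbu, hCval]
        ext a
        simp only [Finset.mem_union, Finset.mem_sdiff]
        have hab : a ∈ SA s → a ∈ SB s := fun h => hAsubB h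
        tauto
    · -- singleton branch
      have hpend' : (gSt SA SB SC H N (i+1)).1 = st.1 := by rw [hgst, heq]
      have hDM : Finset.Ioc (N - (i+1)) N \ (gSt SA SB SC H N (i+1)).1
          = insert s (Finset.Ioc s N \ st.1) := by
        rw [hpend', hNi1]
        ext t
        simp only [Finset.mem_sdiff, Finset.mem_Ioc, Finset.mem_insert]
        constructor
        · rintro ⟨⟨ht1, ht2⟩, ht3⟩
          by_cases hts : t = s
          · exact Or.inl hts
          · exact Or.inr ⟨⟨by omega, ht2⟩, ht3⟩
        · rintro (rfl | ⟨⟨ht1, ht2⟩, ht3⟩)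
          · exact ⟨⟨by omega, by omega⟩, hsnp⟩
          · exact ⟨⟨by omega, ht2⟩, ht3⟩
      have hcong : ∀ t ∈ Finset.Ioc s N \ st.1,
          (gSt SA SB SC H N (i+1)).2 t = st.2 t := by
        intro t ht
        obtain ⟨htI, htp⟩ := Finset.mem_sdiff.mp ht
        have ht1 := Finset.mem_Ioc.mp htI
        rw [hgst, heq]
        simp only
        rw [if_neg (by omega)]
      have hvs : (gSt SA SB SC H N (i+1)).2 s = SB s := by
        rw [hgst, heq]; simp
      have hdsB : Disjoint (SB s) ((Finset.Ioc s N \ st.1).biUnion SB) := by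
        refine hdisj_BB s hs1 hsN ?_
        intro t' ht'
        have := Finset.mem_Ioc.mp (Finset.mem_sdiff.mp ht').1
        omega
      have hval : ∀ u, u ∈ insert s (Finset.Ioc s N \ st.1) →
          ((u = s ∧ (gSt SA SB SC H N (i+1)).2 u = SB s) ∨
           (u ∈ Finset.Ioc s N \ st.1 ∧ (gSt SA SB SC H N (i+1)).2 u = st.2 u)) := by
        intro u hu
        by_cases h1 : u = s
        · exact Or.inl ⟨h1, by rw [h1, hvs]⟩
        · have huD : u ∈ Finset.Ioc s N \ st.1 := by
            simp only [Finset.mem_insert, h1, false_or] at hu; exact hu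
          exact Or.inr ⟨huD, hcong u huD⟩
      have hdst : ∀ u ∈ Finset.Ioc s N \ st.1, Disjoint (SB s) (st.2 u) := by
        intro u hu
        exact Finset.disjoint_of_subset_right (hasg_sub u hu) hdsB
      refine ⟨?_, ?_, ?_⟩
      · intro t ht
        rw [hDM] at ht
        rcases hval t ht with ⟨he, hv⟩ | ⟨hm, hv⟩
        · exact ⟨s, hs1, hsN, by rw [hv]; exact hBH⟩
        · obtain ⟨g, h1, h2, h3⟩ := ihm t hm
          exact ⟨g, h1, h2, by rw [hv]; exact h3⟩
      · intro t ht t' ht' hne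
        rw [hDM] at ht ht'
        rcases hval t ht with ⟨he, hv⟩ | ⟨hm, hv⟩ <;>
          rcases hval t' ht' with ⟨he', hv'⟩ | ⟨hm', hv'⟩ <;> rw [hv, hv']
        · exact absurd (he.trans he'.symm) hne
        · exact hdst t' hm'
        · exact (hdst t hm).symm
        · exact ihd t hm t' hm' hne
      · rw [hDM, Finset.biUnion_insert, Finset.biUnion_insert, hvs,
          (Finset.biUnion_congr rfl hcong).trans ihu]
    · -- push branch
      have hpend' : (gSt SA SB SC H N (i+1)).1 = insert s st.1 := by rw [hgst, heq]
      have hasg' : (gSt SA SB SC H N (i+1)).2 = st.2 := by rw [hgst, heq]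
      have hDM : Finset.Ioc (N - (i+1)) N \ (gSt SA SB SC H N (i+1)).1
          = Finset.Ioc s N \ st.1 := by
        rw [hpend', hNi1]
        ext t
        simp only [Finset.mem_sdiff, Finset.mem_Ioc, Finset.mem_insert]
        constructor
        · rintro ⟨⟨ht1, ht2⟩, ht3⟩
          have hts : t ≠ s := fun hc => ht3 (Or.inl hc)
          exact ⟨⟨by omega, ht2⟩, fun hc => ht3 (Or.inr hc)⟩
        · rintro ⟨⟨ht1, ht2⟩, ht3⟩
          refine ⟨⟨by omega, ht2⟩, ?_⟩
          rintro (rfl | hc)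
          · omega
          · exact ht3 hc
      rw [hDM, hasg']
      exact ⟨ihm, ihd, ihu⟩


lemma gfail (G : ℕ → Finset (Finset α))
    (hSAG : ∀ s, 1 ≤ s → s ≤ N → SA (s-1) ∈ G s)
    (hSBG : ∀ s, 1 ≤ s → s ≤ N → SB s ∈ G s)
    (hSCG : ∀ f s, 1 ≤ s → s < f → f ≤ N → SC f s ∈ G f)
    (hBA : ∀ f, 1 ≤ f → f ≤ N → SA (f-1) ≠ SB f)
    (hAC : ∀ f s, 1 ≤ s → s < f → f ≤ N → SA (f-1) ≠ SC f s)
    (hBC : ∀ f s, 1 ≤ s → s < f → f ≤ N → SB f ≠ SC f s)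
    (hCC : ∀ f s s', 1 ≤ s → s < f → 1 ≤ s' → s' < f → f ≤ N → s ≠ s' → SC f s ≠ SC f s')
    (hcount : ∀ t, 1 ≤ t → t ≤ N → ∑ s ∈ Finset.Icc 1 t, (G s \ H s).card ≤ t - 1)
    (hne : (gSt SA SB SC H N N).1.Nonempty) : False := by
  classical
  set f1 := (gSt SA SB SC H N N).1.max' hne with hf1def
  have hf1p : f1 ∈ (gSt SA SB SC H N N).1 := Finset.max'_mem _ hne
  have hf1Ioc := Finset.mem_Ioc.mp (pend_sub SA SB SC H N N le_rfl hf1p)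
  have hf1_1 : 1 ≤ f1 := by omega
  have hf1N : f1 ≤ N := hf1Ioc.2
  -- persistence of f1 in the pending set
  have persist : ∀ c, c ≤ f1 - 1 → f1 ∈ (gSt SA SB SC H N (N - c)).1 := by
    intro c
    induction c with
    | zero => intro _; simpa using hf1p
    | succ c ihc =>
      intro hc
      have h1 : f1 ∈ (gSt SA SB SC H N (N - c)).1 := ihc (by omega)
      have h2 : N - c = (N - (c+1)) + 1 := by omega
      rw [h2] at h1
      exact mem_pend_pred SA SB SC H N (N - (c+1)) f1 h1 (by omega)
  -- the witness map
  have hwit : ∀ s, ∃ p : ℕ × Finset α, s ∈ Finset.Icc 1 f1 →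
      ((1 ≤ p.1 ∧ p.1 ≤ f1 ∧ p.2 ∈ G p.1 \ H p.1) ∧
       ((p.1 = f1 ∧ p.2 = SB f1 ∧ s = f1)
        ∨ (p.2 = SB p.1 ∧ p.1 < f1 ∧ p.1 ∈ (gSt SA SB SC H N (N - s)).1 ∧
            p.1 ∉ (gSt SA SB SC H N (N - s + 1)).1)
        ∨ (p.1 = s + 1 ∧ p.2 = SA s ∧ s < f1)
        ∨ (p.1 = f1 ∧ p.2 = SC f1 s ∧ s < f1))) := by
    intro s
    by_cases hs : s ∈ Finset.Icc 1 f1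
    swap
    · exact ⟨(0, ∅), fun hc => absurd hc hs⟩
    obtain ⟨hs1, hsf1⟩ := Finset.mem_Icc.mp hs
    by_cases hsf : s = f1
    · refine ⟨(f1, SB f1), fun _ => ⟨⟨hf1_1, le_rfl, ?_⟩, Or.inl ⟨rfl, rfl, hsf⟩⟩⟩
      exact Finset.mem_sdiff.mpr ⟨hSBG f1 hf1_1 hf1N, pend_B SA SB SC H N N f1 hf1p⟩
    have hslt : s < f1 := by omega
    have hsN : s ≤ N := by omega
    have hmem1 : f1 ∈ (gSt SA SB SC H N (N - s)).1 := by
      have := persist s (by omega)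
      exact this
    have hmem2 : f1 ∈ (gSt SA SB SC H N (N - s + 1)).1 := by
      have h2 : N - (s - 1) = N - s + 1 := by omega
      have := persist (s - 1) (by omega)
      rwa [h2] at this
    have hieq : N - (N - s) = s := by omega
    have hstep : gSt SA SB SC H N (N - s + 1)
        = gstep SA SB SC H s (gSt SA SB SC H N (N - s)) := by
      rw [gSt, hieq]
    have hpsub2 := pend_sub SA SB SC H N (N - s) (by omega)
    rcases gstep_branch SA SB SC H s (gSt SA SB SC H N (N - s)) with
      ⟨fm, hfm, hfmC, hfmmin, hAH, heq⟩ | ⟨hnc, hBH, heq⟩ | ⟨hnc, hBH, heq⟩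
    · -- pair branch
      have hmem2' : f1 ∈ (gSt SA SB SC H N (N - s)).1.erase fm := by
        rw [hstep, heq] at hmem2; exact hmem2
      have hfmne : f1 ≠ fm := (Finset.mem_erase.mp hmem2').1
      have hfmIoc := Finset.mem_Ioc.mp (hpsub2 hfm)
      by_cases hlt : fm < f1
      · refine ⟨(fm, SB fm), fun _ => ⟨⟨by omega, by omega, ?_⟩,
          Or.inr (Or.inl ⟨rfl, hlt, hfm, ?_⟩)⟩⟩
        · exact Finset.mem_sdiff.mpr ⟨hSBG fm (by omega) (by omega),
            pend_B SA SB SC H N (N - s) fm hfm⟩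
        · rw [hstep, heq]
          simp
      · have hCnot : SC f1 s ∉ H f1 := by
          intro hc
          have := hfmmin f1 hmem1 hc
          omega
        refine ⟨(f1, SC f1 s), fun _ => ⟨⟨hf1_1, le_rfl, ?_⟩,
          Or.inr (Or.inr (Or.inr ⟨rfl, rfl, hslt⟩))⟩⟩
        exact Finset.mem_sdiff.mpr ⟨hSCG f1 s hs1 hslt hf1N, hCnot⟩
    · -- singleton branch: the pair condition failed
      by_cases hA : SA s ∈ H (s+1)
      · have hfe : ¬ ((gSt SA SB SC H N (N - s)).1.filter fun f => SC f s ∈ H f).Nonempty :=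
          fun h => hnc ⟨h, hA⟩
        have hCnot : SC f1 s ∉ H f1 :=
          fun hc => hfe ⟨f1, Finset.mem_filter.mpr ⟨hmem1, hc⟩⟩
        refine ⟨(f1, SC f1 s), fun _ => ⟨⟨hf1_1, le_rfl, ?_⟩,
          Or.inr (Or.inr (Or.inr ⟨rfl, rfl, hslt⟩))⟩⟩
        exact Finset.mem_sdiff.mpr ⟨hSCG f1 s hs1 hslt hf1N, hCnot⟩
      · refine ⟨(s + 1, SA s), fun _ => ⟨⟨by omega, by omega, ?_⟩,
          Or.inr (Or.inr (Or.inl ⟨rfl, rfl, hslt⟩))⟩⟩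
        have := hSAG (s+1) (by omega) (by omega)
        simp only [Nat.add_sub_cancel] at this
        exact Finset.mem_sdiff.mpr ⟨this, hA⟩
    · -- push branch: the pair condition failed
      by_cases hA : SA s ∈ H (s+1)
      · have hfe : ¬ ((gSt SA SB SC H N (N - s)).1.filter fun f => SC f s ∈ H f).Nonempty :=
          fun h => hnc ⟨h, hA⟩
        have hCnot : SC f1 s ∉ H f1 :=
          fun hc => hfe ⟨f1, Finset.mem_filter.mpr ⟨hmem1, hc⟩⟩
        refine ⟨(f1, SC f1 s), fun _ => ⟨⟨hf1_1, le_rfl, ?_⟩,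
          Or.inr (Or.inr (Or.inr ⟨rfl, rfl, hslt⟩))⟩⟩
        exact Finset.mem_sdiff.mpr ⟨hSCG f1 s hs1 hslt hf1N, hCnot⟩
      · refine ⟨(s + 1, SA s), fun _ => ⟨⟨by omega, by omega, ?_⟩,
          Or.inr (Or.inr (Or.inl ⟨rfl, rfl, hslt⟩))⟩⟩
        have := hSAG (s+1) (by omega) (by omega)
        simp only [Nat.add_sub_cancel] at this
        exact Finset.mem_sdiff.mpr ⟨this, hA⟩
  choose w hw using hwit
  -- no two distinct steps share a witness
  have herased : ∀ s s' f, s < s' → s' ≤ N →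
      f ∈ (gSt SA SB SC H N (N - s)).1 →
      f ∈ (gSt SA SB SC H N (N - s')).1 →
      f ∉ (gSt SA SB SC H N (N - s' + 1)).1 → False := by
    intro s s' f hss hs'N hin hin' hout
    have hfIoc := Finset.mem_Ioc.mp (pend_sub SA SB SC H N (N - s') (by omega) hin')
    have habs : f ∉ (gSt SA SB SC H N (N - s)).1 := by
      refine absent_mono SA SB SC H N f (N - s' + 1) (N - s) (by omega) hout ?_
      intro jj h1 h2
      omega
    exact habs hin
  have hinj : ∀ s s', s ∈ Finset.Icc 1 f1 → s' ∈ Finset.Icc 1 f1 → s ≠ s' →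
      (w s).1 = (w s').1 → (w s).2 = (w s').2 → False := by
    intro s s' hsm hsm' hss hg he
    obtain ⟨hs1, hsf1⟩ := Finset.mem_Icc.mp hsm
    obtain ⟨hs1', hsf1'⟩ := Finset.mem_Icc.mp hsm'
    obtain ⟨⟨hp1, hp2, hp3⟩, hK⟩ := hw s hsm
    obtain ⟨⟨hq1, hq2, hq3⟩, hK'⟩ := hw s' hsm'
    rcases hK with ⟨k1, k2, k3⟩ | ⟨k1, k2, k3, k4⟩ | ⟨k1, k2, k3⟩ | ⟨k1, k2, k3⟩ <;>
      rcases hK' with ⟨l1, l2, l3⟩ | ⟨l1, l2, l3, l4⟩ | ⟨l1, l2, l3⟩ | ⟨l1, l2, l3⟩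
    · exact hss (k3.trans l3.symm)
    · omega
    · -- B(f1) vs A
      refine hBA f1 hf1_1 hf1N ?_
      have hs'e : s' = f1 - 1 := by omega
      rw [show f1 - 1 = s' from hs'e.symm, ← l2, ← he, k2]
    · exact hBC f1 s' hs1' l3 hf1N (by rw [← k2, he, l2])
    · omega
    · -- B vs B, both erased
      rcases Nat.lt_or_ge s s' with h | h
      · exact herased s s' (w s').1 h (by omega) (hg ▸ k3) l3 l4
      · exact herased s' s (w s').1 (by omega) (by omega) l3 (hg ▸ k3) (hg ▸ k4)
    · -- B vs A
      have hfIoc := Finset.mem_Ioc.mp (pend_sub SA SB SC H N (N - s) (by omega) k3)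
      refine hBA (w s).1 (by omega) (by omega) ?_
      have hse : s' = (w s).1 - 1 := by omega
      rw [← hse, ← l2, ← he, k1]
    · omega
    · -- A vs B(f1)
      refine hBA f1 hf1_1 hf1N ?_
      have hse : s = f1 - 1 := by omega
      rw [show f1 - 1 = s from hse.symm, ← k2, he, l2]
    · -- A vs B erased
      have hfIoc := Finset.mem_Ioc.mp (pend_sub SA SB SC H N (N - s') (by omega) l3)
      refine hBA (w s').1 (by omega) (by omega) ?_
      have hse : s = (w s').1 - 1 := by omega
      rw [← hse, ← k2, he, l1]
    · exact hss (by omega)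
    · -- A vs C
      refine hAC f1 s' hs1' l3 hf1N ?_
      have : s = f1 - 1 := by omega
      rw [show f1 - 1 = s from this.symm, ← k2, he, l2]
    · exact hBC f1 s hs1 k3 hf1N (by rw [← l2, ← he, k2])
    · omega
    · -- C vs A
      refine hAC f1 s hs1 k3 hf1N ?_
      have hse : s' = f1 - 1 := by omega
      rw [← hse, ← l2, ← he, k2]
    · exact hCC f1 s s' hs1 k3 hs1' l3 hf1N hss (by rw [← k2, he, l2])
  have hcard : (Finset.Icc 1 f1).card ≤ ((Finset.Icc 1 f1).sigma fun g => G g \ H g).card := by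
    refine Finset.card_le_card_of_injOn
      (fun s => (⟨(w s).1, (w s).2⟩ : (_ : ℕ) × Finset α)) ?_ ?_
    · intro s hs
      obtain ⟨⟨h1, h2, h3⟩, _⟩ := hw s hs
      exact Finset.mem_sigma.mpr ⟨Finset.mem_Icc.mpr ⟨h1, h2⟩, h3⟩
    · intro s hs s' hs' heq2
      by_contra hss
      have hg : (w s).1 = (w s').1 := congrArg Sigma.fst heq2
      have he : (w s).2 = (w s').2 := by
        obtain ⟨h1, h2⟩ := Sigma.mk.inj_iff.mp heq2
        exact eq_of_heq h2
      exact hinj s s' (Finset.mem_coe.mp hs) (Finset.mem_coe.mp hs') hss hg he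
  rw [Finset.card_sigma] at hcard
  have h1 := hcount f1 hf1_1 hf1N
  rw [Nat.card_Icc] at hcard
  omega


lemma greedy_main (G : ℕ → Finset (Finset α))
    (hsub : ∀ s, 1 ≤ s → s ≤ N → SA s ⊆ SB s)
    (hCeq : ∀ f s, 1 ≤ s → s < f → f ≤ N → SC f s = SB f ∪ (SB s \ SA s))
    (hdBB : ∀ s t, 1 ≤ s → s ≤ N → 1 ≤ t → t ≤ N → s ≠ t → Disjoint (SB s) (SB t))
    (hSAG : ∀ s, 1 ≤ s → s ≤ N → SA (s-1) ∈ G s)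
    (hSBG : ∀ s, 1 ≤ s → s ≤ N → SB s ∈ G s)
    (hSCG : ∀ f s, 1 ≤ s → s < f → f ≤ N → SC f s ∈ G f)
    (hBA : ∀ f, 1 ≤ f → f ≤ N → SA (f-1) ≠ SB f)
    (hAC : ∀ f s, 1 ≤ s → s < f → f ≤ N → SA (f-1) ≠ SC f s)
    (hBC : ∀ f s, 1 ≤ s → s < f → f ≤ N → SB f ≠ SC f s)
    (hCC : ∀ f s s', 1 ≤ s → s < f → 1 ≤ s' → s' < f → f ≤ N → s ≠ s' → SC f s ≠ SC f s')
    (hcount : ∀ t, 1 ≤ t → t ≤ N → ∑ s ∈ Finset.Icc 1 t, (G s \ H s).card ≤ t - 1) :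
    ∃ asg : ℕ → Finset α,
      (∀ t ∈ Finset.Icc 1 N, ∃ g, 1 ≤ g ∧ g ≤ N ∧ asg t ∈ H g) ∧
      (∀ t ∈ Finset.Icc 1 N, ∀ t' ∈ Finset.Icc 1 N, t ≠ t' → Disjoint (asg t) (asg t')) ∧
      ((Finset.Icc 1 N).biUnion asg = (Finset.Icc 1 N).biUnion SB) := by
  by_cases hne : (gSt SA SB SC H N N).1.Nonempty
  · exact absurd (gfail SA SB SC H N G hSAG hSBG hSCG hBA hAC hBC hCC hcount hne) not_false
  · have hemp : (gSt SA SB SC H N N).1 = ∅ := Finset.not_nonempty_iff_eq_empty.mp hne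
    obtain ⟨hm, hd, hu⟩ := gInv SA SB SC H N hsub hCeq hdBB N le_rfl
    rw [hemp, Finset.sdiff_empty, Nat.sub_self, ← Finset.Icc_add_one_left_eq_Ioc 0 N] at hm hd hu
    exact ⟨(gSt SA SB SC H N N).2, hm, hd, hu⟩


section Geom

variable {n : ℕ} (x : ZMod n ≃ Fin n) (c : ZMod n)

lemma psi_inj (u v : ℕ) (hu1 : 1 ≤ u) (hu2 : u ≤ n) (hv1 : 1 ≤ v) (hv2 : v ≤ n)
    (h : x (c + (u : ZMod n)) = x (c + (v : ZMod n))) : u = v := by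
  have h2 : (u : ZMod n) = v := add_left_cancel (x.injective h)
  have h3 : u ≡ v [MOD n] := (ZMod.natCast_eq_natCast_iff _ _ _).mp h2
  unfold Nat.ModEq at h3
  rcases Nat.lt_or_ge u n with h4 | h4
  · rcases Nat.lt_or_ge v n with h5 | h5
    · rwa [Nat.mod_eq_of_lt h4, Nat.mod_eq_of_lt h5] at h3
    · have hv : v = n := by omega
      rw [hv, Nat.mod_self, Nat.mod_eq_of_lt h4] at h3
      omega
  · have hu : u = n := by omega
    rcases Nat.lt_or_ge v n with h5 | h5
    · rw [hu, Nat.mod_self, Nat.mod_eq_of_lt h5] at h3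
      omega
    · omega

lemma psi_img_disj (I J : Finset ℕ) (hI : I ⊆ Finset.Icc 1 n) (hJ : J ⊆ Finset.Icc 1 n)
    (hIJ : Disjoint I J) :
    Disjoint (I.image fun u : ℕ => x (c + (u : ZMod n))) (J.image fun u : ℕ => x (c + (u : ZMod n))) := by
  rw [Finset.disjoint_left]
  rintro a ha hb
  obtain ⟨u, hu, rfl⟩ := Finset.mem_image.mp ha
  obtain ⟨v, hv, hvv⟩ := Finset.mem_image.mp hb
  have h1 := Finset.mem_Icc.mp (hI hu)
  have h2 := Finset.mem_Icc.mp (hJ hv)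
  have := psi_inj x c v u h2.1 h2.2 h1.1 h1.2 hvv
  subst this
  exact (Finset.disjoint_left.mp hIJ hu) hv

lemma psi_img_sdiff (I J : Finset ℕ) (hJI : J ⊆ I) (hI : I ⊆ Finset.Icc 1 n) :
    (I.image fun u : ℕ => x (c + (u : ZMod n))) \ (J.image fun u : ℕ => x (c + (u : ZMod n)))
      = (I \ J).image fun u : ℕ => x (c + (u : ZMod n)) := by
  ext a
  simp only [Finset.mem_sdiff, Finset.mem_image]
  constructor
  · rintro ⟨⟨u, hu, rfl⟩, hb⟩
    refine ⟨u, ⟨hu, fun hc => hb ⟨u, hc, rfl⟩⟩, rfl⟩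
  · rintro ⟨u, ⟨hu1, hu2⟩, rfl⟩
    refine ⟨⟨u, hu1, rfl⟩, ?_⟩
    rintro ⟨v, hv, hvv⟩
    have h1 := Finset.mem_Icc.mp (hI hu1)
    have h2 := Finset.mem_Icc.mp (hI (hJI hv))
    have := psi_inj x c v u h2.1 h2.2 h1.1 h1.2 hvv
    subst this
    exact hu2 hv

lemma psi_img_card (I : Finset ℕ) (hI : I ⊆ Finset.Icc 1 n) :
    (I.image fun u : ℕ => x (c + (u : ZMod n))).card = I.card := by
  refine Finset.card_image_of_injOn ?_
  intro u hu v hv h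
  have h1 := Finset.mem_Icc.mp (hI hu)
  have h2 := Finset.mem_Icc.mp (hI hv)
  exact psi_inj x c u v h1.1 h1.2 h2.1 h2.2 h

lemma add_image (a L : ℕ) :
    (Finset.Icc 1 L).image (fun i => a + i) = Finset.Ioc a (a + L) := by
  ext u
  simp only [Finset.mem_image, Finset.mem_Icc, Finset.mem_Ioc]
  constructor
  · rintro ⟨i, hi, rfl⟩; omega
  · intro hu; exact ⟨u - a, by omega, by omega⟩

end Geom

end MissingSetsAux


/-- **Lemma 3.1.** Let `m > ℓ > 0`, `k ≥ 3`, `n = km - ℓ`, `d = gcd(n, m)`,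
`n̄ = n/d`, and let `x : ℤ/nℤ ≃ [n]` be a cyclic arrangement of `[n]`. For
`r ∈ ℤ/n̄ℤ` let `B_r = {x_j : (r-1)m < j ≤ rm}` (indices of `x` mod `n`), `A_r` the
arc of the first `m - ℓ` elements of `B_r`, `D_r = B_r \ A_r`, and
`C_r(j) = B_r ∪ D_{r+j}` (index `r + j` mod `n̄`). Fix `r` and define the groups
`G_1 = {A_r, B_{r-1}}` and `G_s = {A_{r-s+1}, B_{r-s}} ∪ {C_{r-s}(j) : 1 ≤ j ≤ s-1}`
for `2 ≤ s ≤ k - 1`. If `H_s ⊆ G_s` for `1 ≤ s ≤ k - 1` are such that one cannot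
choose `k` pairwise disjoint members of `H_1 ∪ ... ∪ H_{k-1}` whose union is
`A_r ∪ B_{r-1} ∪ ... ∪ B_{r-k+1}`, then there is `t` with `1 ≤ t ≤ k - 1` and
`∑_{s=1}^{t} |G_s \ H_s| ≥ t`. -/
theorem missing_sets_lemma (k m ℓ : ℕ) (hk : 3 ≤ k) (hℓ : 0 < ℓ) (hml : ℓ < m)
    (n : ℕ) (hn : n = k * m - ℓ) (d : ℕ) (hd : d = Nat.gcd n m)
    (nb : ℕ) (hnb : nb = n / d)
    (x : ZMod n ≃ Fin n)
    (B A D : ZMod nb → Finset (Fin n)) (C : ZMod nb → ℕ → Finset (Fin n))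
    (hB : ∀ r, B r = (Finset.Icc 1 m).image
      fun s => x (((r.val + nb - 1) * m + s : ℕ) : ZMod n))
    (hA : ∀ r, A r = (Finset.Icc 1 (m - ℓ)).image
      fun s => x (((r.val + nb - 1) * m + s : ℕ) : ZMod n))
    (hD : ∀ r, D r = B r \ A r)
    (hC : ∀ r j, C r j = B r ∪ D (r + (j : ZMod nb)))
    (r : ZMod nb)
    (G H : ℕ → Finset (Finset (Fin n)))
    (hG : ∀ s, G s = {A (r - (s : ZMod nb) + 1), B (r - (s : ZMod nb))}
      ∪ (Finset.Icc 1 (s - 1)).image fun j => C (r - (s : ZMod nb)) j)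
    (hH : ∀ s, H s ⊆ G s)
    (hnopart : ¬ ∃ P : Fin k → Finset (Fin n),
      (∀ i, P i ∈ (Finset.Icc 1 (k - 1)).biUnion H) ∧
      (∀ i j, i ≠ j → Disjoint (P i) (P j)) ∧
      Finset.univ.biUnion P
        = A r ∪ (Finset.Icc 1 (k - 1)).biUnion fun s => B (r - (s : ZMod nb))) :
    ∃ t, 1 ≤ t ∧ t ≤ k - 1 ∧ t ≤ ∑ s ∈ Finset.Icc 1 t, (G s \ H s).card := by
  classical
  by_contra hcon
  push_neg at hcon
  apply hnopart
  -- arithmetic setup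
  have h3m : 3 * m ≤ k * m := Nat.mul_le_mul_right m hk
  have hmpos : 0 < m := by omega
  have hnpos : 0 < n := by omega
  have hdn : d ∣ n := hd ▸ Nat.gcd_dvd_left n m
  have hdm : d ∣ m := hd ▸ Nat.gcd_dvd_right n m
  have hdpos : 0 < d := hd ▸ Nat.gcd_pos_of_pos_right n hmpos
  have hnbpos : 0 < nb := by
    rw [hnb]; exact Nat.div_pos (Nat.le_of_dvd hnpos hdn) hdpos
  haveI : NeZero nb := ⟨hnbpos.ne'⟩
  have hkm : k * m = (k-1)*m + m := by
    have h1 : (k - 1) + 1 = k := by omega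
    calc k * m = ((k-1)+1) * m := by rw [h1]
    _ = (k-1)*m + m := by rw [add_mul, one_mul]
  have hk1mn : (k-1)*m + (m - ℓ) = n := by omega
  have hndvd : n ∣ nb * m := by
    rw [hnb]
    obtain ⟨m', hm'⟩ := hdm
    refine ⟨m', ?_⟩
    rw [hm', ← mul_assoc, Nat.div_mul_cancel hdn]
  -- the key modular identity
  have key : ∀ s : ℕ, (((r - (s : ZMod nb)).val * m + s * m : ℕ) : ZMod n)
      = ((r.val * m : ℕ) : ZMod n) := by
    intro s
    rw [ZMod.natCast_eq_natCast_iff]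
    have h1 : ((r - (s : ZMod nb)).val + s) ≡ r.val [MOD nb] := by
      rw [← ZMod.natCast_eq_natCast_iff]
      push_cast
      rw [ZMod.natCast_val, ZMod.cast_id, ZMod.natCast_val, ZMod.cast_id]
      exact sub_add_cancel r _
    have h2 := h1.mul_right' m
    exact Nat.ModEq.of_dvd hndvd (by simpa [add_mul] using h2)
  -- base point for the linear picture
  set c : ZMod n := (((r.val + nb - 1) * m : ℕ) : ZMod n) - (((k-1)*m : ℕ) : ZMod n) with hcdef
  have ptwise : ∀ s i : ℕ, s ≤ k - 1 →
      x ((((r - (s : ZMod nb)).val + nb - 1) * m + i : ℕ) : ZMod n)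
        = x (c + (((k-1-s)*m + i : ℕ) : ZMod n)) := by
    intro s i hs
    congr 1
    rw [hcdef]
    have e1 : ((r - (s : ZMod nb)).val + nb - 1) * m + i
        = (r - (s : ZMod nb)).val * m + ((nb - 1) * m + i) := by
      have h1 : (r - (s : ZMod nb)).val + nb - 1 = (r - (s : ZMod nb)).val + (nb - 1) := by
        omega
      rw [h1, add_mul, add_assoc]
    have e2 : (r.val + nb - 1) * m = r.val * m + (nb - 1) * m := by
      have h1 : r.val + nb - 1 = r.val + (nb - 1) := by omega
      rw [h1, add_mul]
    have e3 : (k - 1) * m = (k - 1 - s) * m + s * m := by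
      have h1 : (k - 1) = (k - 1 - s) + s := by omega
      rw [← add_mul, ← h1]
    rw [e1, e2, e3]
    have key' := key s
    push_cast at key' ⊢
    linear_combination key'
  -- interval representations
  have repB : ∀ s : ℕ, s ≤ k - 1 → B (r - (s : ZMod nb))
      = (Finset.Ioc ((k-1-s)*m) ((k-1-s)*m + m)).image (fun u : ℕ => x (c + (u : ZMod n))) := by
    intro s hs
    rw [hB (r - (s : ZMod nb)), ← MissingSetsAux.add_image ((k-1-s)*m) m, Finset.image_image]
    exact Finset.image_congr fun i _ => ptwise s i hs
  have repA : ∀ s : ℕ, s ≤ k - 1 → A (r - (s : ZMod nb))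
      = (Finset.Ioc ((k-1-s)*m) ((k-1-s)*m + (m - ℓ))).image
          (fun u : ℕ => x (c + (u : ZMod n))) := by
    intro s hs
    rw [hA (r - (s : ZMod nb)), ← MissingSetsAux.add_image ((k-1-s)*m) (m - ℓ),
      Finset.image_image]
    exact Finset.image_congr fun i _ => ptwise s i hs
  -- bounds
  have hbB : ∀ s : ℕ, 1 ≤ s → s ≤ k - 1 → (k-1-s)*m + m ≤ (k-1)*m := by
    intro s h1 h2
    have h3 : (k-1-s) + 1 ≤ k - 1 := by omega
    have h4 : ((k-1-s)+1)*m ≤ (k-1)*m := Nat.mul_le_mul_right m h3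
    rw [add_mul, one_mul] at h4
    exact h4
  have hk1mle : (k-1)*m ≤ n := by omega
  have hsubIccB : ∀ s : ℕ, 1 ≤ s → s ≤ k - 1 →
      Finset.Ioc ((k-1-s)*m) ((k-1-s)*m + m) ⊆ Finset.Icc 1 n := by
    intro s h1 h2 u hu
    have h3 := Finset.mem_Ioc.mp hu
    have h4 := hbB s h1 h2
    exact Finset.mem_Icc.mpr ⟨by omega, by omega⟩
  have hsubIccA : ∀ s : ℕ, s ≤ k - 1 →
      Finset.Ioc ((k-1-s)*m) ((k-1-s)*m + (m - ℓ)) ⊆ Finset.Icc 1 n := by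
    intro s h2 u hu
    have h3 := Finset.mem_Ioc.mp hu
    rcases Nat.eq_zero_or_pos s with rfl | hs1
    · simp only [Nat.sub_zero] at h3
      exact Finset.mem_Icc.mpr ⟨by omega, by omega⟩
    · have h4 := hbB s hs1 h2
      exact Finset.mem_Icc.mpr ⟨by omega, by omega⟩
  have repD : ∀ s : ℕ, 1 ≤ s → s ≤ k - 1 → D (r - (s : ZMod nb))
      = (Finset.Ioc ((k-1-s)*m + (m - ℓ)) ((k-1-s)*m + m)).image
          (fun u : ℕ => x (c + (u : ZMod n))) := by
    intro s h1 h2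
    rw [hD, repB s h2, repA s h2,
      MissingSetsAux.psi_img_sdiff x c _ _
        (Finset.Ioc_subset_Ioc_right (by omega)) (hsubIccB s h1 h2)]
    congr 1
    ext u
    simp only [Finset.mem_sdiff, Finset.mem_Ioc]
    omega
  -- disjointness of distinct blocks
  have hIocDisj : ∀ a b a' b' : ℕ, b ≤ a' ∨ b' ≤ a →
      Disjoint (Finset.Ioc a b) (Finset.Ioc a' b') := by
    intro a b a' b' hab
    rw [Finset.disjoint_left]
    intro u hu hu'
    have h1 := Finset.mem_Ioc.mp hu
    have h2 := Finset.mem_Ioc.mp hu'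
    omega
  have hblockDisj : ∀ s t : ℕ, 1 ≤ s → s ≤ k-1 → 1 ≤ t → t ≤ k-1 → s ≠ t →
      Disjoint (B (r - (s : ZMod nb))) (B (r - (t : ZMod nb))) := by
    intro s t hs1 hs2 ht1 ht2 hst
    rw [repB s hs2, repB t ht2]
    refine MissingSetsAux.psi_img_disj x c _ _ (hsubIccB s hs1 hs2) (hsubIccB t ht1 ht2) ?_
    refine hIocDisj _ _ _ _ ?_
    rcases Nat.lt_or_ge s t with h | h
    · right
      have h3 : (k-1-t) + 1 ≤ k-1-s := by omega
      have h4 := Nat.mul_le_mul_right m h3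
      rw [add_mul, one_mul] at h4
      omega
    · left
      have h3 : (k-1-s) + 1 ≤ k-1-t := by omega
      have h4 := Nat.mul_le_mul_right m h3
      rw [add_mul, one_mul] at h4
      omega
  -- A r written in block form
  have hAr0 : A r = A (r - ((0 : ℕ) : ZMod nb)) := by norm_num
  have hArDisj : ∀ t : ℕ, 1 ≤ t → t ≤ k-1 → Disjoint (A r) (B (r - (t : ZMod nb))) := by
    intro t ht1 ht2
    rw [hAr0, repA 0 (by omega), repB t ht2]
    refine MissingSetsAux.psi_img_disj x c _ _ (hsubIccA 0 (by omega))
      (hsubIccB t ht1 ht2) ?_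
    refine hIocDisj _ _ _ _ ?_
    right
    simp only [Nat.sub_zero]
    have h3 : (k-1-t) + 1 ≤ k-1 := by omega
    have h4 := Nat.mul_le_mul_right m h3
    rw [add_mul, one_mul] at h4
    omega
  -- cards
  have cardB : ∀ s : ℕ, 1 ≤ s → s ≤ k-1 → (B (r - (s : ZMod nb))).card = m := by
    intro s h1 h2
    rw [repB s h2, MissingSetsAux.psi_img_card x c _ (hsubIccB s h1 h2), Nat.card_Ioc]
    omega
  have cardA : ∀ s : ℕ, s ≤ k-1 → (A (r - (s : ZMod nb))).card = m - ℓ := by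
    intro s h2
    rw [repA s h2, MissingSetsAux.psi_img_card x c _ (hsubIccA s h2), Nat.card_Ioc]
    omega
  have cardD : ∀ s : ℕ, 1 ≤ s → s ≤ k-1 → (D (r - (s : ZMod nb))).card = ℓ := by
    intro s h1 h2
    have hsub2 : Finset.Ioc ((k-1-s)*m + (m - ℓ)) ((k-1-s)*m + m) ⊆ Finset.Icc 1 n := by
      intro u hu
      have h3 := Finset.mem_Ioc.mp hu
      have h4 := hbB s h1 h2
      exact Finset.mem_Icc.mpr ⟨by omega, by omega⟩
    rw [repD s h1 h2, MissingSetsAux.psi_img_card x c _ hsub2, Nat.card_Ioc]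
    omega
  have hDsubB : ∀ s : ℕ, D (r - (s : ZMod nb)) ⊆ B (r - (s : ZMod nb)) := by
    intro s
    rw [hD]
    exact Finset.sdiff_subset
  -- C written via blocks
  have hCval : ∀ f s : ℕ, 1 ≤ s → s < f → f ≤ k-1 →
      C (r - (f : ZMod nb)) (f - s)
        = B (r - (f : ZMod nb)) ∪ (B (r - (s : ZMod nb)) \ A (r - (s : ZMod nb))) := by
    intro f s h1 h2 h3
    rw [hC, ← hD]
    congr 2
    have hcast : ((f - s : ℕ) : ZMod nb) = (f : ZMod nb) - (s : ZMod nb) :=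
      Nat.cast_sub (by omega)
    rw [hcast]
    ring
  have cardC : ∀ f s : ℕ, 1 ≤ s → s < f → f ≤ k-1 →
      (C (r - (f : ZMod nb)) (f - s)).card = m + ℓ := by
    intro f s h1 h2 h3
    rw [hCval f s h1 h2 h3, ← hD,
      Finset.card_union_of_disjoint
        (Finset.disjoint_of_subset_right (hDsubB s)
          (hblockDisj f s (by omega) h3 h1 (by omega) (by omega))),
      cardB f (by omega) h3, cardD s h1 (by omega)]
  -- instantiate the abstract greedy lemma
  set N := k - 1 with hNdef
  have hNge : 2 ≤ N := by omega
  have hcount : ∀ t, 1 ≤ t → t ≤ N → ∑ s ∈ Finset.Icc 1 t, (G s \ H s).card ≤ t - 1 := by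
    intro t h1 h2
    have := hcon t h1 h2
    omega
  obtain ⟨asg, hmem, hdisj, hun⟩ :=
    MissingSetsAux.greedy_main (fun t => A (r - (t : ZMod nb)))
      (fun t => B (r - (t : ZMod nb)))
      (fun f s => C (r - (f : ZMod nb)) (f - s)) H N G
      (by -- hsub
        intro s h1 h2
        beta_reduce
        rw [hA, hB]
        exact Finset.image_subset_image (Finset.Icc_subset_Icc_right (by omega)))
      (by -- hCeq
        intro f s h1 h2 h3
        exact hCval f s h1 h2 h3)
      (by -- hdBB
        intro s t h1 h2 h3 h4 h5
        exact hblockDisj s t h1 h2 h3 h4 h5)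
      (by -- hSAG
        intro s h1 h2
        beta_reduce
        rw [hG s]
        have hcast : (((s - 1 : ℕ)) : ZMod nb) = (s : ZMod nb) - 1 := by
          rw [Nat.cast_sub h1, Nat.cast_one]
        have : A (r - (((s-1:ℕ)) : ZMod nb)) = A (r - (s : ZMod nb) + 1) := by
          rw [hcast]; ring_nf
        rw [this]
        exact Finset.mem_union_left _ (Finset.mem_insert_self _ _))
      (by -- hSBG
        intro s h1 h2
        beta_reduce
        rw [hG s]
        exact Finset.mem_union_left _
          (Finset.mem_insert.mpr (Or.inr (Finset.mem_singleton_self _))))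
      (by -- hSCG
        intro f s h1 h2 h3
        beta_reduce
        rw [hG f]
        refine Finset.mem_union_right _ (Finset.mem_image.mpr ⟨f - s, ?_, rfl⟩)
        exact Finset.mem_Icc.mpr ⟨by omega, by omega⟩)
      (by -- hBA
        intro f h1 h2 hEq
        beta_reduce at hEq
        have := congrArg Finset.card hEq
        rw [cardA (f-1) (by omega), cardB f h1 h2] at this
        omega)
      (by -- hAC
        intro f s h1 h2 h3 hEq
        beta_reduce at hEq
        have := congrArg Finset.card hEq
        rw [cardA (f-1) (by omega), cardC f s h1 h2 h3] at this
        omega)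
      (by -- hBC
        intro f s h1 h2 h3 hEq
        beta_reduce at hEq
        have := congrArg Finset.card hEq
        rw [cardB f (by omega) h3, cardC f s h1 h2 h3] at this
        omega)
      (by -- hCC
        intro f s s' h1 h2 h1' h2' h3 hss hEq
        beta_reduce at hEq
        have hDne : (D (r - (s : ZMod nb))).Nonempty := by
          rw [← Finset.card_pos, cardD s h1 (by omega)]; omega
        obtain ⟨z, hz⟩ := hDne
        have hz1 : z ∈ C (r - (f : ZMod nb)) (f - s) := by
          rw [hCval f s h1 h2 h3, ← hD]
          exact Finset.mem_union_right _ hz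
        rw [hEq, hCval f s' h1' h2' h3, ← hD] at hz1
        have hzB : z ∈ B (r - (s : ZMod nb)) := hDsubB s hz
        rcases Finset.mem_union.mp hz1 with h | h
        · exact Finset.disjoint_left.mp
            (hblockDisj s f (by omega) (by omega) (by omega) h3 (by omega)) hzB h
        · exact Finset.disjoint_left.mp
            (hblockDisj s s' (by omega) (by omega) (by omega) (by omega) hss)
            hzB (hDsubB s' h))
      hcount
  -- A r is present
  have hArG1 : A r ∈ G 1 := by
    rw [hG 1]
    have : A (r - ((1:ℕ) : ZMod nb) + 1) = A r := by
      rw [Nat.cast_one]; ring_nf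
    rw [this]
    exact Finset.mem_union_left _ (Finset.mem_insert_self _ _)
  have hArH1 : A r ∈ H 1 := by
    have h0 := hcount 1 le_rfl (by omega)
    rw [Finset.Icc_self, Finset.sum_singleton] at h0
    by_contra hna
    have hmem1 : A r ∈ G 1 \ H 1 := Finset.mem_sdiff.mpr ⟨hArG1, hna⟩
    have := Finset.card_pos.mpr ⟨A r, hmem1⟩
    omega
  -- asg values sit inside the union of the blocks
  have hasgSub : ∀ t ∈ Finset.Icc 1 N, asg t ⊆
      (Finset.Icc 1 N).biUnion (fun t => B (r - (t : ZMod nb))) := by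
    intro t ht
    rw [← hun]
    exact Finset.subset_biUnion_of_mem asg ht
  have hArBig : Disjoint (A r) ((Finset.Icc 1 N).biUnion (fun t => B (r - (t : ZMod nb)))) := by
    rw [Finset.disjoint_biUnion_right]
    intro t ht
    have h1 := Finset.mem_Icc.mp ht
    exact hArDisj t h1.1 h1.2
  -- build the partition
  refine ⟨fun i => if (i : ℕ) = 0 then A r else asg (i : ℕ), ?_, ?_, ?_⟩
  · intro i
    beta_reduce
    by_cases h0 : (i : ℕ) = 0
    · rw [if_pos h0]
      exact Finset.mem_biUnion.mpr ⟨1, Finset.mem_Icc.mpr ⟨le_rfl, by omega⟩, hArH1⟩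
    · rw [if_neg h0]
      have hiv : (i : ℕ) ∈ Finset.Icc 1 N := by
        have := i.isLt
        exact Finset.mem_Icc.mpr ⟨by omega, by omega⟩
      obtain ⟨g, hg1, hg2, hg3⟩ := hmem (i : ℕ) hiv
      exact Finset.mem_biUnion.mpr ⟨g, Finset.mem_Icc.mpr ⟨hg1, hg2⟩, hg3⟩
  · intro i j hij
    beta_reduce
    have hv : (i : ℕ) ≠ (j : ℕ) := fun hc => hij (Fin.ext hc)
    by_cases h0 : (i : ℕ) = 0
    · rw [if_pos h0]
      have hj0 : ¬ (j : ℕ) = 0 := by omega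
      rw [if_neg hj0]
      have hjv : (j : ℕ) ∈ Finset.Icc 1 N := by
        have := j.isLt
        exact Finset.mem_Icc.mpr ⟨by omega, by omega⟩
      exact Finset.disjoint_of_subset_right (hasgSub _ hjv) hArBig
    · rw [if_neg h0]
      by_cases hj0 : (j : ℕ) = 0
      · rw [if_pos hj0]
        have hiv : (i : ℕ) ∈ Finset.Icc 1 N := by
          have := i.isLt
          exact Finset.mem_Icc.mpr ⟨by omega, by omega⟩
        exact (Finset.disjoint_of_subset_right (hasgSub _ hiv) hArBig).symm
      · rw [if_neg hj0]
        have hiv : (i : ℕ) ∈ Finset.Icc 1 N := by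
          have := i.isLt
          exact Finset.mem_Icc.mpr ⟨by omega, by omega⟩
        have hjv : (j : ℕ) ∈ Finset.Icc 1 N := by
          have := j.isLt
          exact Finset.mem_Icc.mpr ⟨by omega, by omega⟩
        exact hdisj _ hiv _ hjv hv
  · ext a
    simp only [Finset.mem_biUnion, Finset.mem_univ, true_and, Finset.mem_union]
    constructor
    · rintro ⟨i, hi⟩
      by_cases h0 : (i : ℕ) = 0
      · rw [if_pos h0] at hi
        exact Or.inl hi
      · rw [if_neg h0] at hi
        have hiv : (i : ℕ) ∈ Finset.Icc 1 N := by
          have := i.isLt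
          exact Finset.mem_Icc.mpr ⟨by omega, by omega⟩
        have : a ∈ (Finset.Icc 1 N).biUnion (fun t => B (r - (t : ZMod nb))) :=
          hasgSub _ hiv hi
        obtain ⟨t, ht1, ht2⟩ := Finset.mem_biUnion.mp this
        exact Or.inr ⟨t, ht1, ht2⟩
    · rintro (h | ⟨t, ht1, ht2⟩)
      · refine ⟨⟨0, by omega⟩, ?_⟩
        rw [if_pos rfl]
        exact h
      · have ht3 := Finset.mem_Icc.mp ht1
        have haB : a ∈ (Finset.Icc 1 N).biUnion asg := by
          rw [hun]
          exact Finset.mem_biUnion.mpr ⟨t, ht1, ht2⟩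
        obtain ⟨t', ht1', ht2'⟩ := Finset.mem_biUnion.mp haB
        have ht3' := Finset.mem_Icc.mp ht1'
        refine ⟨⟨t', by omega⟩, ?_⟩
        rw [if_neg (by simp; omega)]
        exact ht2'
end

section
/- Let k ≥ 3 and m ≥ 2 be integers, n = km − 1, and let F be a k-partition-free family of subsets of [n]. Setting y(j) = binom(n, j) − |F^{(j)}| for 0 ≤ j ≤ n, for every integer ℓ with 2 ≤ ℓ ≤ m one has y(m − ℓ) + ((k − 2)/(k − 1)^ℓ)·y(m) + (1/(k − 1)^ℓ)·y(m + ℓ − 1) ≥ binom(km − 1, m − ℓ). -/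
open Finset

def missN {n : ℕ} (F : Finset (Finset (Fin n))) (X : Finset (Fin n)) (b : ℕ) : ℕ :=
  ((X.powersetCard b).filter (fun B => B ∉ F)).card

lemma choose_id (N a b : ℕ) (h : a + b ≤ N) :
    (N - b).choose a * N.choose b = N.choose a * (N - a).choose b := by
  have h1 := Nat.choose_mul (n := N) (k := a + b) (s := a) (Nat.le_add_right a b)
  have h2 := Nat.choose_mul (n := N) (k := a + b) (s := b) (Nat.le_add_left b a)
  simp only [Nat.add_sub_cancel, Nat.add_sub_cancel_left] at h1 h2
  rw [Nat.choose_symm_add] at h1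
  rw [mul_comm, ← h2, h1]

lemma pc_sdiff {n : ℕ} (X B : Finset (Fin n)) (hB : B ⊆ X) (b : ℕ) :
    (X \ B).powersetCard b = (X.powersetCard b).filter (fun B' => Disjoint B' B) := by
  ext B'
  simp only [Finset.mem_powersetCard, Finset.mem_filter, Finset.subset_sdiff]
  tauto

lemma double_count {n : ℕ} (F : Finset (Finset (Fin n))) (X : Finset (Fin n)) (a b : ℕ) :
    ∑ B ∈ X.powersetCard a, missN F (X \ B) b
      = missN F X b * (X.card - b).choose a := by
  have key : ∀ B ∈ X.powersetCard a,
      missN F (X \ B) b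
        = ∑ B' ∈ X.powersetCard b, (if B' ∉ F ∧ Disjoint B' B then 1 else 0) := by
    intro B hB
    rw [Finset.mem_powersetCard] at hB
    rw [missN, pc_sdiff X B hB.1, Finset.filter_filter, Finset.card_filter]
    exact Finset.sum_congr rfl fun x _ => if_congr and_comm rfl rfl
  rw [Finset.sum_congr rfl key, Finset.sum_comm]
  have key2 : ∀ B' ∈ X.powersetCard b,
      ∑ B ∈ X.powersetCard a, (if B' ∉ F ∧ Disjoint B' B then 1 else 0)
        = if B' ∉ F then (X.card - b).choose a else 0 := by
    intro B' hB'
    rw [Finset.mem_powersetCard] at hB'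
    by_cases h1 : B' ∈ F
    · simp [h1]
    · simp only [h1, not_false_eq_true, true_and, if_true, Finset.sum_boole, Nat.cast_id]
      have : (X.powersetCard a).filter (fun B => Disjoint B' B)
          = (X \ B').powersetCard a := by
        rw [pc_sdiff X B' hB'.1 a]
        ext B; simp only [Finset.mem_filter]
        exact and_congr_right fun _ => disjoint_comm
      rw [this, Finset.card_powersetCard, Finset.card_sdiff_of_subset hB'.1, hB'.2]
  rw [Finset.sum_congr rfl key2, Finset.sum_ite, Finset.sum_const_zero, add_zero,
    Finset.sum_const, smul_eq_mul, missN]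

lemma subset_foldr {n : ℕ} (l : List (Finset (Fin n))) (C : Finset (Fin n)) (hC : C ∈ l) :
    C ⊆ l.foldr (· ∪ ·) ∅ := by
  induction l with
  | nil => simp at hC
  | cons D l ih =>
    rcases List.mem_cons.mp hC with h | h
    · subst h; exact Finset.subset_union_left
    · exact (ih h).trans Finset.subset_union_right

lemma mem_foldr_union {n : ℕ} (l : List (Finset (Fin n))) (x : Fin n) :
    x ∈ l.foldr (· ∪ ·) ∅ ↔ ∃ C ∈ l, x ∈ C := by
  induction l with
  | nil => simp
  | cons D l ih => simp [ih]

lemma sum_list_comm {α β : Type*} (S : Finset α) (L : List β) (g : α → β → ℝ) :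
    ∑ B ∈ S, (L.map (g B)).sum = (L.map (fun b => ∑ B ∈ S, g B b)).sum := by
  induction L with
  | nil => simp
  | cons b L ih => simp [Finset.sum_add_distrib, ih]

lemma main_ind {n : ℕ} (F : Finset (Finset (Fin n))) :
    ∀ (L : List ℕ) (X : Finset (Fin n)), L.sum = X.card →
    (¬ ∃ l : List (Finset (Fin n)), (∀ B ∈ l, B ∈ F) ∧ l.Pairwise Disjoint ∧
        l.map Finset.card = L ∧ l.foldr (· ∪ ·) ∅ = X) →
    (1 : ℝ) ≤ (L.map (fun b => (missN F X b : ℝ) / (X.card.choose b : ℝ))).sum := by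
  intro L
  induction L with
  | nil =>
    intro X hsum hno
    exact absurd ⟨[], by simp, List.Pairwise.nil, rfl,
      by simp [(Finset.card_eq_zero.mp hsum.symm)]⟩ hno
  | cons a L ih =>
    intro X hsum hno
    rw [List.sum_cons] at hsum
    set N := X.card with hN
    have haN : a ≤ N := by omega
    have hCa : (0:ℝ) < (N.choose a : ℝ) := by exact_mod_cast Nat.choose_pos haN
    -- step 1 : pointwise inequality
    have step1 : ∀ B ∈ X.powersetCard a,
        (1:ℝ) ≤ (if B ∉ F then (1:ℝ) else 0)
          + (L.map (fun b => (missN F (X \ B) b : ℝ) / ((N - a).choose b : ℝ))).sum := by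
      intro B hB
      rw [Finset.mem_powersetCard] at hB
      have hcard : (X \ B).card = N - a := by rw [Finset.card_sdiff_of_subset hB.1, hB.2]
      by_cases hBF : B ∈ F
      · have hnp : ¬ ∃ l : List (Finset (Fin n)), (∀ C ∈ l, C ∈ F) ∧ l.Pairwise Disjoint ∧
            l.map Finset.card = L ∧ l.foldr (· ∪ ·) ∅ = X \ B := by
          rintro ⟨l, h1, h2, h3, h4⟩
          refine hno ⟨B :: l, ?_, ?_, by simp [h3, hB.2], ?_⟩
          · intro C hC
            rcases List.mem_cons.mp hC with h | h
            · subst h; exact hBF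
            · exact h1 C h
          · refine List.Pairwise.cons (fun C hC => ?_) h2
            have hCs : C ⊆ X \ B := h4 ▸ subset_foldr l C hC
            exact (Finset.disjoint_sdiff.mono_right hCs)
          · rw [List.foldr_cons, h4, Finset.union_sdiff_of_subset hB.1]
        have h5 := ih (X \ B) (by omega) hnp
        rw [hcard] at h5
        simp only [hBF, not_true_eq_false, if_false, zero_add]
        exact h5
      · have hnonneg : (0:ℝ) ≤
            (L.map (fun b => (missN F (X \ B) b : ℝ) / ((N - a).choose b : ℝ))).sum := by
          apply List.sum_nonneg
          intro x hx
          simp only [List.mem_map] at hx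
          obtain ⟨b, _, rfl⟩ := hx
          positivity
        simp only [hBF, not_false_eq_true, if_true]
        linarith
    -- step 2 : sum it
    have step2 : (N.choose a : ℝ) ≤ (missN F X a : ℝ)
        + ∑ B ∈ X.powersetCard a,
            (L.map (fun b => (missN F (X \ B) b : ℝ) / ((N - a).choose b : ℝ))).sum := by
      have h6 := Finset.sum_le_sum step1
      rw [Finset.sum_add_distrib, Finset.sum_boole, Finset.sum_const, nsmul_eq_mul, mul_one,
        Finset.card_powersetCard] at h6
      exact le_trans (by rw [hN]) h6
    -- step 3 : evaluate the double sum
    rw [sum_list_comm] at step2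
    have step3 : ∀ b ∈ L,
        ∑ B ∈ X.powersetCard a, (missN F (X \ B) b : ℝ) / ((N - a).choose b : ℝ)
          = (missN F X b : ℝ) / (N.choose b : ℝ) * (N.choose a : ℝ) := by
      intro b hb
      have hbNa : b ≤ N - a := by
        have := List.single_le_sum (fun x (_ : x ∈ L) => Nat.zero_le x) b hb
        omega
      have hC1 : (0:ℝ) < ((N - a).choose b : ℝ) := by
        exact_mod_cast Nat.choose_pos hbNa
      have hC2 : (0:ℝ) < (N.choose b : ℝ) := by
        exact_mod_cast Nat.choose_pos (by omega : b ≤ N)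
      rw [← Finset.sum_div]
      have hdc : (∑ B ∈ X.powersetCard a, (missN F (X \ B) b : ℝ))
          = (missN F X b : ℝ) * ((N - b).choose a : ℝ) := by
        rw [← Nat.cast_sum]
        exact_mod_cast congrArg (Nat.cast : ℕ → ℝ) (double_count F X a b)
      rw [hdc, div_eq_iff hC1.ne', div_mul_eq_mul_div, div_mul_eq_mul_div,
        eq_div_iff hC2.ne']
      have kidR : ((N - b).choose a : ℝ) * (N.choose b : ℝ)
          = (N.choose a : ℝ) * ((N - a).choose b : ℝ) := by
        exact_mod_cast congrArg (Nat.cast : ℕ → ℝ) (choose_id N a b (by omega))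
      linear_combination (missN F X b : ℝ) * kidR
    rw [List.map_congr_left step3, List.sum_map_mul_right] at step2
    rw [List.map_cons, List.sum_cons]
    set T := (L.map (fun b => (missN F X b : ℝ) / (N.choose b : ℝ))).sum with hT
    have hTnn : 0 ≤ T := by
      apply List.sum_nonneg
      intro x hx
      simp only [List.mem_map] at hx
      obtain ⟨b, _, rfl⟩ := hx
      positivity
    have hmiss : (missN F X a : ℝ) = (missN F X a : ℝ) / (N.choose a) * (N.choose a) :=
      (div_mul_cancel₀ _ hCa.ne').symm
    rw [hmiss] at step2
    nlinarith [step2]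

lemma step_up (n k j : ℕ) (h : (k-1)*(j+1) ≤ n - j) : (k-1) * n.choose j ≤ n.choose (j+1) := by
  have key := Nat.choose_succ_right_eq n j
  have h2 : (k-1) * n.choose j * (j+1) ≤ n.choose (j+1) * (j+1) := by
    calc (k-1) * n.choose j * (j+1) = n.choose j * ((k-1)*(j+1)) := by ring
    _ ≤ n.choose j * (n - j) := Nat.mul_le_mul_left _ h
    _ = n.choose (j+1) * (j+1) := key.symm
  exact Nat.le_of_mul_le_mul_right h2 (Nat.succ_pos j)

lemma chooseA (k m n : ℕ) (hk : 3 ≤ k) (hm : 2 ≤ m) (hn : n = k*m - 1) :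
    ∀ ℓ, ℓ ≤ m → (k-1)^ℓ * n.choose (m - ℓ) ≤ n.choose m := by
  intro ℓ
  induction ℓ with
  | zero => simp
  | succ ℓ ih =>
    intro hl
    have hstep : (k-1) * n.choose (m - (ℓ+1)) ≤ n.choose (m - ℓ) := by
      have he : m - ℓ = (m - (ℓ+1)) + 1 := by omega
      rw [he]
      apply step_up
      have h1 : 3*m ≤ k*m := Nat.mul_le_mul_right m hk
      have h2 : (k-1)*m = k*m - m := by rw [Nat.sub_mul, one_mul]
      have h3 : (k-1)*(m - (ℓ+1) + 1) ≤ (k-1)*m := Nat.mul_le_mul_left _ (by omega)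
      omega
    calc (k-1)^(ℓ+1) * n.choose (m - (ℓ+1))
        = (k-1)^ℓ * ((k-1) * n.choose (m - (ℓ+1))) := by ring
      _ ≤ (k-1)^ℓ * n.choose (m - ℓ) := Nat.mul_le_mul_left _ hstep
      _ ≤ n.choose m := ih (by omega)

lemma choose_le_choose_of (n : ℕ) : ∀ i j, i ≤ j → 2*j ≤ n → n.choose i ≤ n.choose j := by
  intro i j hij
  induction j, hij using Nat.le_induction with
  | base => intro _; exact le_rfl
  | succ j hij ih =>
    intro h2
    exact le_trans (ih (by omega)) (Nat.choose_le_succ_of_lt_half_left (by omega))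

lemma chooseB (k m n ℓ : ℕ) (hk : 3 ≤ k) (hm : 2 ≤ m) (hn : n = k*m - 1)
    (hl2 : 2 ≤ ℓ) (hlm : ℓ ≤ m) : n.choose m ≤ n.choose (m + ℓ - 1) := by
  have h1 : 3*m ≤ k*m := Nat.mul_le_mul_right m hk
  set t := m + ℓ - 1 with ht
  have hmt : m ≤ t := by omega
  have htn : t ≤ n := by omega
  by_cases h : 2*t ≤ n
  · exact choose_le_choose_of n m t hmt h
  · rw [← Nat.choose_symm htn]
    exact choose_le_choose_of n m (n - t) (by omega) (by omega)

lemma ratio_eq (N a b : ℕ) (h : a + b ≤ N) (x : ℝ) :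
    x * ((N - b).choose a : ℝ) / ((N - a).choose b : ℝ)
      = x * ((N.choose a : ℝ) / (N.choose b : ℝ)) := by
  have h1 : (0:ℝ) < ((N - a).choose b : ℝ) := by
    exact_mod_cast Nat.choose_pos (by omega : b ≤ N - a)
  have h2 : (0:ℝ) < (N.choose b : ℝ) := by
    exact_mod_cast Nat.choose_pos (by omega : b ≤ N)
  have kidR : ((N - b).choose a : ℝ) * (N.choose b : ℝ)
      = (N.choose a : ℝ) * ((N - a).choose b : ℝ) := by
    exact_mod_cast congrArg (Nat.cast : ℕ → ℝ) (choose_id N a b h)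
  field_simp
  linear_combination x * kidR

lemma missN_univ {n : ℕ} (F : Finset (Finset (Fin n))) (b : ℕ) :
    (missN F Finset.univ b : ℝ)
      = (n.choose b : ℝ) - ((F.filter fun A => A.card = b).card : ℝ) := by
  have heq : (Finset.univ.powersetCard b).filter (· ∈ F)
      = F.filter (fun A => A.card = b) := by
    ext A
    simp only [Finset.mem_filter, Finset.mem_powersetCard, Finset.subset_univ, true_and]
    tauto
  have hsplit := Finset.card_filter_add_card_filter_not
    (s := Finset.univ.powersetCard b) (p := (· ∈ F))
  rw [Finset.card_powersetCard, Finset.card_univ, Fintype.card_fin, heq] at hsplit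
  rw [missN]
  push_cast [← hsplit]
  ring

lemma no_partition_aux {n k m t : ℕ} (hk : 3 ≤ k)
    (F : Finset (Finset (Fin n))) (hF : PartitionFree k F)
    (A : Finset (Fin n)) (hA : A ∈ F) :
    ¬ ∃ l : List (Finset (Fin n)), (∀ B ∈ l, B ∈ F) ∧ l.Pairwise Disjoint ∧
        l.map Finset.card = List.replicate (k-2) m ++ [t] ∧
        l.foldr (· ∪ ·) ∅ = Finset.univ \ A := by
  rintro ⟨l, h1, h2, h3, h4⟩
  apply hF
  have hlen : (A :: l).length = k := by
    have hl := congrArg List.length h3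
    simp at hl
    simp only [List.length_cons, hl]
    omega
  refine ⟨fun i => (A :: l).get (Fin.cast hlen.symm i), ?_, ?_, ?_⟩
  · intro i
    show (A :: l).get (Fin.cast hlen.symm i) ∈ F
    have hmem : (A :: l).get (Fin.cast hlen.symm i) ∈ A :: l := List.get_mem _ _
    rcases List.mem_cons.mp hmem with h | h
    · rw [h]; exact hA
    · exact h1 _ h
  · have hpw : (A :: l).Pairwise Disjoint := by
      refine List.Pairwise.cons (fun C hC => ?_) h2
      have hCs : C ⊆ Finset.univ \ A := h4 ▸ subset_foldr l C hC
      exact Finset.disjoint_sdiff.mono_right hCs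
    have hget := List.pairwise_iff_get.mp hpw
    intro i j hij
    rcases lt_or_gt_of_ne hij with h | h
    · exact hget _ _ (by simpa using h)
    · exact (hget _ _ (by simpa using h)).symm
  · ext x
    simp only [Finset.mem_biUnion, Finset.mem_univ, true_and, iff_true]
    by_cases hx : x ∈ A
    · exact ⟨⟨0, by omega⟩, by simpa using hx⟩
      
    · have hx2 : x ∈ Finset.univ \ A := by simp [hx]
      rw [← h4, mem_foldr_union] at hx2
      obtain ⟨C, hC, hxC⟩ := hx2
      obtain ⟨j, hj⟩ := List.mem_iff_get.mp hC
      have hjk : j.val + 1 < k := by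
        have hj2 := j.isLt
        simp only [List.length_cons] at hlen
        omega
      refine ⟨⟨j.val + 1, hjk⟩, ?_⟩
      have : (A :: l).get (Fin.cast hlen.symm ⟨j.val + 1, hjk⟩) = l.get j := by
        simp [List.get_cons_succ]
      rw [this, hj]
      exact hxC

/-- **Inequality (4.5).** For `k ≥ 3`, `m ≥ 2`, `n = km - 1` and a
`k`-partition-free family `F ⊆ 2^[n]`, setting `y(j) = C(n,j) - |F^{(j)}|`, for
every `2 ≤ ℓ ≤ m` one has
`y(m-ℓ) + ((k-2)/(k-1)^ℓ)·y(m) + (1/(k-1)^ℓ)·y(m+ℓ-1) ≥ C(km-1, m-ℓ)`. -/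
theorem missing_numbers_ineq' (k m : ℕ) (hk : 3 ≤ k) (hm : 2 ≤ m)
    (n : ℕ) (hn : n = k * m - 1)
    (F : Finset (Finset (Fin n))) (hF : PartitionFree k F)
    (y : ℕ → ℝ)
    (hy : ∀ j, y j = (n.choose j : ℝ) - (F.filter fun A => A.card = j).card) :
    ∀ ℓ : ℕ, 2 ≤ ℓ → ℓ ≤ m →
      y (m - ℓ) + ((k : ℝ) - 2) / ((k : ℝ) - 1) ^ ℓ * y m
          + 1 / ((k : ℝ) - 1) ^ ℓ * y (m + ℓ - 1)
        ≥ (n.choose (m - ℓ) : ℝ) := by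
  intro ℓ hl2 hlm
  obtain ⟨P, Q, hP1, hQ, hQ2, hP3⟩ :
      ∃ P Q, n = P - 1 ∧ (k-2)*m = Q ∧ Q = P - 2*m ∧ 3*m ≤ P :=
    ⟨k*m, (k-2)*m, hn, rfl, by rw [Nat.sub_mul, two_mul], Nat.mul_le_mul_right m hk⟩
  set s := m - ℓ with hs
  set t := m + ℓ - 1 with ht
  -- arithmetic facts
  have hsn : s + m ≤ n := by omega
  have hst : s + t ≤ n := by omega
  have hmn : m ≤ n := by omega
  have htn : t ≤ n := by omega
  have hsn' : s ≤ n := by omega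
  have hntt : m ≤ n - s := by omega
  have hntt2 : t ≤ n - s := by omega
  -- the list of part sizes
  set L : List ℕ := List.replicate (k-2) m ++ [t] with hL
  have hsum : L.sum = n - s := by
    rw [hL, List.sum_append, List.sum_replicate, smul_eq_mul, List.sum_singleton, hQ]
    omega
  -- positivity of binomials
  have hCns : (0:ℝ) < (n.choose s : ℝ) := by exact_mod_cast Nat.choose_pos hsn'
  have hCnm : (0:ℝ) < (n.choose m : ℝ) := by exact_mod_cast Nat.choose_pos hmn
  have hCnt : (0:ℝ) < (n.choose t : ℝ) := by exact_mod_cast Nat.choose_pos htn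
  have hCm : (0:ℝ) < ((n - s).choose m : ℝ) := by exact_mod_cast Nat.choose_pos hntt
  have hCt : (0:ℝ) < ((n - s).choose t : ℝ) := by exact_mod_cast Nat.choose_pos hntt2
  have hK : (0:ℝ) < (((k-1)^ℓ : ℕ) : ℝ) := by
    have : 0 < (k-1)^ℓ := Nat.pow_pos (by omega)
    exact_mod_cast this
  -- per-A inequality
  have perA : ∀ A ∈ F.filter (fun A => A.card = s),
      (1:ℝ) ≤ ((k-2 : ℕ) : ℝ) * ((missN F (Finset.univ \ A) m : ℝ) / ((n-s).choose m : ℝ))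
        + (missN F (Finset.univ \ A) t : ℝ) / ((n-s).choose t : ℝ) := by
    intro A hA
    rw [Finset.mem_filter] at hA
    have hXcard : (Finset.univ \ A).card = n - s := by
      rw [Finset.card_sdiff_of_subset (Finset.subset_univ A), Finset.card_univ, Fintype.card_fin, hA.2]
    have hmi := main_ind F L (Finset.univ \ A) (by rw [hXcard, hsum])
      (no_partition_aux hk F hF A hA.1)
    rw [hXcard] at hmi
    rw [hL, List.map_append, List.sum_append, List.map_replicate, List.sum_replicate,
      nsmul_eq_mul, List.map_singleton, List.sum_singleton] at hmi
    exact hmi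
  -- summation
  set Fs := F.filter (fun A => A.card = s) with hFs
  have hFsub : Fs ⊆ Finset.univ.powersetCard s := by
    intro A hA
    rw [Finset.mem_powersetCard]
    exact ⟨Finset.subset_univ A, (Finset.mem_filter.mp hA).2⟩
  have hg_nonneg : ∀ A ∈ Finset.univ.powersetCard s, (0:ℝ) ≤
      ((k-2 : ℕ) : ℝ) * ((missN F (Finset.univ \ A) m : ℝ) / ((n-s).choose m : ℝ))
        + (missN F (Finset.univ \ A) t : ℝ) / ((n-s).choose t : ℝ) := by
    intro A _
    positivity
  have hucard : (Finset.univ : Finset (Fin n)).card = n := by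
    rw [Finset.card_univ, Fintype.card_fin]
  have hdm : ∑ A ∈ Finset.univ.powersetCard s, (missN F (Finset.univ \ A) m : ℝ)
      = (missN F Finset.univ m : ℝ) * ((n - m).choose s : ℝ) := by
    rw [← Nat.cast_sum]
    have := double_count F (Finset.univ : Finset (Fin n)) s m
    rw [hucard] at this
    exact_mod_cast congrArg (Nat.cast : ℕ → ℝ) this
  have hdt : ∑ A ∈ Finset.univ.powersetCard s, (missN F (Finset.univ \ A) t : ℝ)
      = (missN F Finset.univ t : ℝ) * ((n - t).choose s : ℝ) := by
    rw [← Nat.cast_sum]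
    have := double_count F (Finset.univ : Finset (Fin n)) s t
    rw [hucard] at this
    exact_mod_cast congrArg (Nat.cast : ℕ → ℝ) this
  have key : (Fs.card : ℝ) ≤
      ((k-2 : ℕ) : ℝ) * ((missN F Finset.univ m : ℝ) * ((n.choose s : ℝ) / (n.choose m : ℝ)))
        + (missN F Finset.univ t : ℝ) * ((n.choose s : ℝ) / (n.choose t : ℝ)) := by
    calc (Fs.card : ℝ) = ∑ _A ∈ Fs, (1:ℝ) := by rw [Finset.sum_const, nsmul_eq_mul, mul_one]
      _ ≤ ∑ A ∈ Fs, (((k-2 : ℕ) : ℝ) * ((missN F (Finset.univ \ A) m : ℝ) / ((n-s).choose m : ℝ))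
          + (missN F (Finset.univ \ A) t : ℝ) / ((n-s).choose t : ℝ)) := Finset.sum_le_sum perA
      _ ≤ ∑ A ∈ Finset.univ.powersetCard s,
          (((k-2 : ℕ) : ℝ) * ((missN F (Finset.univ \ A) m : ℝ) / ((n-s).choose m : ℝ))
          + (missN F (Finset.univ \ A) t : ℝ) / ((n-s).choose t : ℝ)) :=
        Finset.sum_le_sum_of_subset_of_nonneg hFsub (fun A hA _ => hg_nonneg A hA)
      _ = ((k-2 : ℕ) : ℝ) * ((∑ A ∈ Finset.univ.powersetCard s,
            (missN F (Finset.univ \ A) m : ℝ)) / ((n-s).choose m : ℝ))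
          + (∑ A ∈ Finset.univ.powersetCard s,
            (missN F (Finset.univ \ A) t : ℝ)) / ((n-s).choose t : ℝ) := by
        rw [Finset.sum_add_distrib, ← Finset.mul_sum, ← Finset.sum_div, ← Finset.sum_div]
      _ = ((k-2 : ℕ) : ℝ) * ((missN F Finset.univ m : ℝ) * ((n.choose s : ℝ) / (n.choose m : ℝ)))
          + (missN F Finset.univ t : ℝ) * ((n.choose s : ℝ) / (n.choose t : ℝ)) := by
        rw [hdm, hdt, ratio_eq n s m hsn, ratio_eq n s t hst]
  -- ratio bounds
  have hrm : (n.choose s : ℝ) / (n.choose m : ℝ) ≤ 1 / (((k-1)^ℓ : ℕ) : ℝ) := by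
    rw [div_le_div_iff₀ hCnm hK, one_mul]
    have h1 := chooseA k m n hk hm hn ℓ hlm
    rw [← hs, Nat.mul_comm] at h1
    exact_mod_cast h1
  have hrt : (n.choose s : ℝ) / (n.choose t : ℝ) ≤ 1 / (((k-1)^ℓ : ℕ) : ℝ) := by
    rw [div_le_div_iff₀ hCnt hK, one_mul]
    have h1 := chooseA k m n hk hm hn ℓ hlm
    have h2 := chooseB k m n ℓ hk hm hn hl2 hlm
    rw [← hs] at h1
    rw [← ht] at h2
    have h3 : (k-1)^ℓ * n.choose s ≤ n.choose t := le_trans h1 h2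
    rw [Nat.mul_comm] at h3
    exact_mod_cast h3
  -- nonnegativity of miss counts
  have hMm : (0:ℝ) ≤ (missN F Finset.univ m : ℝ) := Nat.cast_nonneg _
  have hMt : (0:ℝ) ≤ (missN F Finset.univ t : ℝ) := Nat.cast_nonneg _
  have hk2 : (0:ℝ) ≤ ((k-2 : ℕ) : ℝ) := Nat.cast_nonneg _
  -- cast simplifications
  have hcast1 : ((k : ℝ) - 2) = ((k-2 : ℕ) : ℝ) := by
    rw [Nat.cast_sub (by omega : 2 ≤ k)]; norm_num
  have hcast2 : ((k : ℝ) - 1) ^ ℓ = (((k-1)^ℓ : ℕ) : ℝ) := by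
    push_cast [Nat.cast_sub (by omega : 1 ≤ k)]
    norm_num
  -- finish
  rw [ge_iff_le]
  simp only [hy]
  rw [← missN_univ F m, ← missN_univ F t, ← hFs]
  have e1 : (missN F Finset.univ m : ℝ) * ((n.choose s : ℝ) / (n.choose m : ℝ))
      ≤ (missN F Finset.univ m : ℝ) * (1 / (((k-1)^ℓ : ℕ) : ℝ)) :=
    mul_le_mul_of_nonneg_left hrm hMm
  have e2 : (missN F Finset.univ t : ℝ) * ((n.choose s : ℝ) / (n.choose t : ℝ))
      ≤ (missN F Finset.univ t : ℝ) * (1 / (((k-1)^ℓ : ℕ) : ℝ)) :=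
    mul_le_mul_of_nonneg_left hrt hMt
  have e3 : ((k-2:ℕ):ℝ) * ((missN F Finset.univ m : ℝ) * ((n.choose s : ℝ) / (n.choose m : ℝ)))
      ≤ ((k-2:ℕ):ℝ) * ((missN F Finset.univ m : ℝ) * (1 / (((k-1)^ℓ : ℕ) : ℝ))) :=
    mul_le_mul_of_nonneg_left e1 hk2
  have e4 : ((k-2:ℕ):ℝ) * ((missN F Finset.univ m : ℝ) * (1 / (((k-1)^ℓ : ℕ) : ℝ)))
      = ((k-2:ℕ):ℝ) / (((k-1)^ℓ : ℕ) : ℝ) * (missN F Finset.univ m : ℝ) := by ring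
  have e5 : (missN F Finset.univ t : ℝ) * (1 / (((k-1)^ℓ : ℕ) : ℝ))
      = 1 / (((k-1)^ℓ : ℕ) : ℝ) * (missN F Finset.univ t : ℝ) := by ring
  rw [hcast1, hcast2]
  linarith [key, e3, e2]
end
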